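/- arXiv:0907.1789 — 7 statements merged into one kernel-verified Lean document; each statement's English description precedes it below -/
import Mathlib

section
/- Under the standing assumptions (T spherical, a ∈ T*, the solution to Eq(T,a) separated, Γ̂ ≠ ∅, P = (α,β) the minimal point of the closure of Γ̂, and P an interior point of Σ), there exists δ > 0 such that π(X) = 1 for every X ∈ Γ with |X − P| < δ that lies in one of the four open sectors C₃₁ = {(α',β') : β' > β, α'+β' < α+β}, C₂₁ = {(α',β') : α' < α, β' < β}, C₂₃ = {(α',β') : α' > α, α'+β' < α+β}, C₁₃ = {(α',β') : β' < β, α'+β' > α+β}. -/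
/-
The sectors `C₃₁`, `C₂₁`, `C₂₃` lie strictly below the line `x + y = α + β`, so a point of `Γ̂`
in them would precede `P`. The sector `C₁₃` is only bounded by the lines through `P`, and every
other line of a triangle keeps a positive distance from `P`; so near `P` the sector meets no
line at all and `π` is constant on it. Were that constant `≠ 1`, the sector would lie in `Γ̂`, and
its closure contains the points `(α + t, β - t)`, `t > 0`, which precede `P`.
-/

open Function Set

variable {R C S : Type*} [DecidableEq R] [DecidableEq C] [DecidableEq S]

/-- Conditions (R1)-(R3) of a latin bitrade: `star` and `tri` are disjoint, and for every
triple in one set and every pair of coordinates there is exactly one triple of the other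
set agreeing in those two coordinates. -/
structure IsLatinBitrade (star tri : Finset (R × C × S)) : Prop where
  disj : Disjoint star tri
  r2a : ∀ p ∈ star, ∃! q, q ∈ tri ∧ q.1 = p.1 ∧ q.2.1 = p.2.1
  r2b : ∀ p ∈ star, ∃! q, q ∈ tri ∧ q.1 = p.1 ∧ q.2.2 = p.2.2
  r2c : ∀ p ∈ star, ∃! q, q ∈ tri ∧ q.2.1 = p.2.1 ∧ q.2.2 = p.2.2
  r3a : ∀ q ∈ tri, ∃! p, p ∈ star ∧ p.1 = q.1 ∧ p.2.1 = q.2.1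
  r3b : ∀ q ∈ tri, ∃! p, p ∈ star ∧ p.1 = q.1 ∧ p.2.2 = q.2.2
  r3c : ∀ q ∈ tri, ∃! p, p ∈ star ∧ p.2.1 = q.2.1 ∧ p.2.2 = q.2.2

/-- A latin bitrade is indecomposable if it is not the disjoint union of two
nonempty latin bitrades. -/
def BitradeIndecomposable (star tri : Finset (R × C × S)) : Prop :=
  ¬ ∃ s₁ t₁ s₂ t₂ : Finset (R × C × S),
      s₁.Nonempty ∧ s₂.Nonempty ∧ Disjoint s₁ s₂ ∧ Disjoint t₁ t₂ ∧
      s₁ ∪ s₂ = star ∧ t₁ ∪ t₂ = tri ∧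
      IsLatinBitrade s₁ t₁ ∧ IsLatinBitrade s₂ t₂

/-- An indecomposable latin bitrade is spherical if `m = s + 2`, where `m` is the total
number of occurring rows, columns and symbols and `s` is the size. -/
def IsSphericalBitrade (star tri : Finset (R × C × S)) : Prop :=
  IsLatinBitrade star tri ∧ BitradeIndecomposable star tri ∧
    (star.image Prod.fst).card + (star.image fun p => p.2.1).card +
      (star.image fun p => p.2.2).card = star.card + 2

/-- `(f1, f2, f3)` is a (rational) solution of the linear system `Eq(T,a)`:
`a₁ = 0`, `a₂ = 0`, `a₃ = 1`, and `b₁ + b₂ = b₃` for every `b ∈ T* \ {a}`. -/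
def IsEqSolution (star : Finset (R × C × S)) (a : R × C × S)
    (f1 : R → ℚ) (f2 : C → ℚ) (f3 : S → ℚ) : Prop :=
  f1 a.1 = 0 ∧ f2 a.2.1 = 0 ∧ f3 a.2.2 = 1 ∧
    ∀ b ∈ star, b ≠ a → f1 b.1 + f2 b.2.1 = f3 b.2.2

/-- The solution is separated: two rows (columns, symbols) receiving the same value coincide. -/
def SeparatedSolution (star : Finset (R × C × S))
    (f1 : R → ℚ) (f2 : C → ℚ) (f3 : S → ℚ) : Prop :=
  ∀ b ∈ star, ∀ d ∈ star,
    (f1 b.1 = f1 d.1 → b.1 = d.1) ∧ (f2 b.2.1 = f2 d.2.1 → b.2.1 = d.2.1) ∧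
      (f3 b.2.2 = f3 d.2.2 → b.2.2 = d.2.2)

/-- The triangle `Σ = {(x,y) : 0 ≤ x, 0 ≤ y, x + y ≤ 1}`. -/
def SigmaT : Set (ℝ × ℝ) := {p | 0 ≤ p.1 ∧ 0 ≤ p.2 ∧ p.1 + p.2 ≤ 1}

/-- The (closed) triangle bounded by the lines `y = r1`, `x = r2` and `x + y = r3`.
If `r1 + r2 = r3` this set degenerates to the single point `(r2, r1)`. -/
def DeltaT (r1 r2 r3 : ℚ) : Set (ℝ × ℝ) :=
  {p | ((r1 : ℝ) ≤ p.2 ∧ (r2 : ℝ) ≤ p.1 ∧ p.1 + p.2 ≤ (r3 : ℝ)) ∨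
       (p.2 ≤ (r1 : ℝ) ∧ p.1 ≤ (r2 : ℝ) ∧ (r3 : ℝ) ≤ p.1 + p.2)}

/-- The triangle bounded by `y = r1`, `x = r2`, `x + y = r3` degenerates:
the three lines meet in a single point. -/
def DeltaDegenerate (r1 r2 r3 : ℚ) : Prop := r1 + r2 = r3

/-- The three pairwise intersection points of the lines `y = r1`, `x = r2`, `x + y = r3`,
i.e. the vertices of the triangle they bound. -/
def DeltaVerts (r1 r2 r3 : ℚ) : Set (ℝ × ℝ) :=
  {((r2 : ℝ), (r1 : ℝ)), ((r3 : ℝ) - (r1 : ℝ), (r1 : ℝ)), ((r2 : ℝ), (r3 : ℝ) - (r2 : ℝ))}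

/-- The horizontal side (upon the line `y = r1`) of the triangle bounded by
`y = r1`, `x = r2`, `x + y = r3`. -/
def sideH (r1 r2 r3 : ℚ) : Set (ℝ × ℝ) :=
  segment ℝ ((r2 : ℝ), (r1 : ℝ)) ((r3 : ℝ) - (r1 : ℝ), (r1 : ℝ))

/-- The vertical side (upon the line `x = r2`). -/
def sideV (r1 r2 r3 : ℚ) : Set (ℝ × ℝ) :=
  segment ℝ ((r2 : ℝ), (r1 : ℝ)) ((r2 : ℝ), (r3 : ℝ) - (r2 : ℝ))

/-- The diagonal side (upon the line `x + y = r3`). -/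
def sideD (r1 r2 r3 : ℚ) : Set (ℝ × ℝ) :=
  segment ℝ ((r3 : ℝ) - (r1 : ℝ), (r1 : ℝ)) ((r2 : ℝ), (r3 : ℝ) - (r2 : ℝ))

/-- The triangle `Δ(c,a)` associated with a triple `c` and the solution `(f1,f2,f3)`. -/
def DeltaOf (f1 : R → ℚ) (f2 : C → ℚ) (f3 : S → ℚ) (c : R × C × S) : Set (ℝ × ℝ) :=
  DeltaT (f1 c.1) (f2 c.2.1) (f3 c.2.2)

/-- `Π`: the union of all sides of the triangles `Δ(c,a)`, `c ∈ T△`. -/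
def PiSet (tri : Finset (R × C × S)) (f1 : R → ℚ) (f2 : C → ℚ) (f3 : S → ℚ) :
    Set (ℝ × ℝ) :=
  ⋃ c ∈ tri, (sideH (f1 c.1) (f2 c.2.1) (f3 c.2.2) ∪
    sideV (f1 c.1) (f2 c.2.1) (f3 c.2.2) ∪ sideD (f1 c.1) (f2 c.2.1) (f3 c.2.2))

/-- `Γ = Int(Σ) \ Π`. -/
def GammaSet (tri : Finset (R × C × S)) (f1 : R → ℚ) (f2 : C → ℚ) (f3 : S → ℚ) :
    Set (ℝ × ℝ) :=
  interior SigmaT \ PiSet tri f1 f2 f3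

/-- `π(X)`: the number of triples `c ∈ T△` such that `X` lies in the interior of `Δ(c,a)`. -/
noncomputable def piCount (tri : Finset (R × C × S))
    (f1 : R → ℚ) (f2 : C → ℚ) (f3 : S → ℚ) (X : ℝ × ℝ) : ℕ :=
  {c : R × C × S | c ∈ tri ∧ X ∈ interior (DeltaOf f1 f2 f3 c)}.ncard

/-- `Γ̂ = {X ∈ Γ : π(X) ≠ 1}`. -/
def GammaHat (tri : Finset (R × C × S)) (f1 : R → ℚ) (f2 : C → ℚ) (f3 : S → ℚ) :
    Set (ℝ × ℝ) :=
  {X ∈ GammaSet tri f1 f2 f3 | piCount tri f1 f2 f3 X ≠ 1}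

/-- The order used to choose the minimal point `P`: `(α,β)` precedes `(α',β')` iff
`α+β < α'+β'`, or `α+β = α'+β'` and `β < β'`. -/
def ptOrder (p q : ℝ × ℝ) : Prop :=
  p.1 + p.2 < q.1 + q.2 ∨ (p.1 + p.2 = q.1 + q.2 ∧ p.2 < q.2)

open Filter Topology Metric

section

-- Fresh type variables, so that the lemmas below do not carry the `DecidableEq` instances above.
variable {R C S : Type*}

def triangleLines (r1 r2 r3 : ℚ) : Set (ℝ × ℝ) :=
  {p | p.2 = r1 ∨ p.1 = r2 ∨ p.1 + p.2 = r3}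

def PiLines (tri : Finset (R × C × S)) (f1 : R → ℚ) (f2 : C → ℚ) (f3 : S → ℚ) :
    Set (ℝ × ℝ) :=
  ⋃ c ∈ tri, triangleLines (f1 c.1) (f2 c.2.1) (f3 c.2.2)

def sector13 (P : ℝ × ℝ) : Set (ℝ × ℝ) := {Y | Y.2 < P.2 ∧ P.1 + P.2 < Y.1 + Y.2}

lemma isClosed_DeltaT (r1 r2 r3 : ℚ) : IsClosed (DeltaT r1 r2 r3) :=
  ((isClosed_le continuous_const continuous_snd).inter
      ((isClosed_le continuous_const continuous_fst).inter
        (isClosed_le (continuous_fst.add continuous_snd) continuous_const))).union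
    ((isClosed_le continuous_snd continuous_const).inter
      ((isClosed_le continuous_fst continuous_const).inter
        (isClosed_le continuous_const (continuous_fst.add continuous_snd))))

lemma frontier_DeltaT_subset (r1 r2 r3 : ℚ) :
    frontier (DeltaT r1 r2 r3) ⊆ triangleLines r1 r2 r3 := by
  rintro p ⟨hcl, hint⟩
  rw [(isClosed_DeltaT r1 r2 r3).closure_eq] at hcl
  by_contra hoff
  obtain ⟨h1, h2, h3⟩ : p.2 ≠ r1 ∧ p.1 ≠ r2 ∧ p.1 + p.2 ≠ r3 := by
    simpa only [triangleLines, mem_ofPred_eq, not_or] using hoff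
  apply hint
  rcases hcl with ⟨hA, hB, hC⟩ | ⟨hA, hB, hC⟩
  · refine interior_maximal (fun q hq => Or.inl ⟨hq.1.le, hq.2.1.le, hq.2.2.le⟩)
      (((isOpen_lt continuous_const continuous_snd).inter
        ((isOpen_lt continuous_const continuous_fst).inter
          (isOpen_lt (continuous_fst.add continuous_snd) continuous_const))) :
        IsOpen {q : ℝ × ℝ | (r1 : ℝ) < q.2 ∧ (r2 : ℝ) < q.1 ∧ q.1 + q.2 < r3})
      ⟨hA.lt_of_ne' h1, hB.lt_of_ne' h2, hC.lt_of_ne h3⟩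
  · refine interior_maximal (fun q hq => Or.inr ⟨hq.1.le, hq.2.1.le, hq.2.2.le⟩)
      (((isOpen_lt continuous_snd continuous_const).inter
        ((isOpen_lt continuous_fst continuous_const).inter
          (isOpen_lt continuous_const (continuous_fst.add continuous_snd)))) :
        IsOpen {q : ℝ × ℝ | q.2 < r1 ∧ q.1 < r2 ∧ (r3 : ℝ) < q.1 + q.2})
      ⟨hA.lt_of_ne h1, hB.lt_of_ne h2, hC.lt_of_ne' h3⟩

lemma LinearMap.eq_of_mem_segment (f : ℝ × ℝ →ₗ[ℝ] ℝ) {p q x : ℝ × ℝ} {r : ℝ}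
    (hp : f p = r) (hq : f q = r) (hx : x ∈ segment ℝ p q) : f x = r := by
  obtain ⟨a, b, -, -, hab, rfl⟩ := hx
  rw [map_add, map_smul, map_smul, hp, hq, smul_eq_mul, smul_eq_mul, ← add_mul, hab, one_mul]

lemma sides_subset_triangleLines (r1 r2 r3 : ℚ) :
    sideH r1 r2 r3 ∪ sideV r1 r2 r3 ∪ sideD r1 r2 r3 ⊆ triangleLines r1 r2 r3 := by
  rintro x ((hx | hx) | hx)
  · exact Or.inl ((LinearMap.snd ℝ ℝ ℝ).eq_of_mem_segment rfl rfl hx)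
  · exact Or.inr (Or.inl ((LinearMap.fst ℝ ℝ ℝ).eq_of_mem_segment rfl rfl hx))
  · refine Or.inr (Or.inr ((LinearMap.fst ℝ ℝ ℝ + LinearMap.snd ℝ ℝ ℝ).eq_of_mem_segment
      ?_ ?_ hx)) <;> simp

lemma PiSet_subset_PiLines (tri : Finset (R × C × S)) (f1 : R → ℚ) (f2 : C → ℚ)
    (f3 : S → ℚ) : PiSet tri f1 f2 f3 ⊆ PiLines tri f1 f2 f3 :=
  iUnion₂_mono fun _ _ => sides_subset_triangleLines _ _ _

lemma IsPreconnected.mem_interior_iff_of_disjoint_frontier {X : Type*} [TopologicalSpace X]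
    {U t : Set X} (hU : IsPreconnected U) (hUt : Disjoint U (frontier t)) {x y : X}
    (hx : x ∈ U) (hy : y ∈ U) : x ∈ interior t ↔ y ∈ interior t := by
  have hcover : U ⊆ interior t ∪ (closure t)ᶜ := fun z hz => by
    by_cases hzt : z ∈ closure t
    · exact Or.inl (by_contra fun hi => hUt.notMem_of_mem_left hz ⟨hzt, hi⟩)
    · exact Or.inr hzt
  rcases hU.subset_or_subset isOpen_interior isClosed_closure.isOpen_compl
    (disjoint_compl_right_iff_subset.mpr interior_subset_closure) hcover with h | h
  · exact iff_of_true (h hx) (h hy)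
  · exact iff_of_false (fun hi => h hx (interior_subset_closure hi))
      (fun hi => h hy (interior_subset_closure hi))

lemma piCount_eq_of_isPreconnected {tri : Finset (R × C × S)} {f1 : R → ℚ} {f2 : C → ℚ}
    {f3 : S → ℚ} {U : Set (ℝ × ℝ)} (hU : IsPreconnected U)
    (hUL : Disjoint U (PiLines tri f1 f2 f3)) {x y : ℝ × ℝ} (hx : x ∈ U) (hy : y ∈ U) :
    piCount tri f1 f2 f3 x = piCount tri f1 f2 f3 y := by
  have hfr : ∀ c ∈ tri, Disjoint U (frontier (DeltaOf f1 f2 f3 c)) := fun c hc =>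
    hUL.mono_right fun _ h => mem_iUnion₂.mpr ⟨c, hc, frontier_DeltaT_subset _ _ _ h⟩
  unfold piCount
  congr 1
  ext c
  exact and_congr_right fun hc => hU.mem_interior_iff_of_disjoint_frontier (hfr c hc) hx hy

lemma eventually_mem_imp_ne {X : Type*} [TopologicalSpace X] {g : X → ℝ} {P : X}
    (hg : ContinuousAt g P) {K : Set X} (hK : ∀ Y ∈ K, g Y ≠ g P) (r : ℝ) :
    ∀ᶠ Y in 𝓝 P, Y ∈ K → g Y ≠ r := by
  by_cases hr : g P = r
  · exact Eventually.of_forall fun Y hY => hr ▸ hK Y hY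
  · filter_upwards [hg.eventually_ne hr] with Y hY _ using hY

lemma eventually_sector13_disjoint_PiLines (tri : Finset (R × C × S)) (f1 : R → ℚ)
    (f2 : C → ℚ) (f3 : S → ℚ) (P : ℝ × ℝ) :
    ∀ᶠ Y in 𝓝 P, Y ∈ sector13 P → Y ∉ PiLines tri f1 f2 f3 := by
  have hlines : ∀ c ∈ tri, ∀ᶠ Y in 𝓝 P, Y ∈ sector13 P →
      Y ∉ triangleLines (f1 c.1) (f2 c.2.1) (f3 c.2.2) := fun c _ => by
    filter_upwards
      [eventually_mem_imp_ne (K := sector13 P) continuous_snd.continuousAt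
        (fun Y hY => hY.1.ne) (f1 c.1),
       eventually_mem_imp_ne (K := sector13 P) continuous_fst.continuousAt
        (fun Y hY => (by linarith [hY.1, hY.2] : P.1 < Y.1).ne') (f2 c.2.1),
       eventually_mem_imp_ne (K := sector13 P) (continuous_fst.add continuous_snd).continuousAt
        (fun Y hY => hY.2.ne') (f3 c.2.2)] with Y h1 h2 h3 hY
    simpa only [triangleLines, mem_ofPred_eq, not_or] using ⟨h1 hY, h2 hY, h3 hY⟩
  filter_upwards [(eventually_all_finset tri).mpr hlines] with Y hY hsec hL
  obtain ⟨c, hc, hcY⟩ := mem_iUnion₂.mp hL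
  exact hY c hc hsec hcY

lemma convex_sector13 (P : ℝ × ℝ) : Convex ℝ (sector13 P) :=
  (convex_halfSpace_lt (LinearMap.snd ℝ ℝ ℝ).isLinear P.2).inter
    (convex_halfSpace_gt (LinearMap.fst ℝ ℝ ℝ + LinearMap.snd ℝ ℝ ℝ).isLinear (P.1 + P.2))

lemma add_sub_mem_closure_ball_inter_sector13 {P : ℝ × ℝ} {δ : ℝ} (hδ : 0 < δ) :
    (P.1 + δ / 2, P.2 - δ / 2) ∈ closure (ball P δ ∩ sector13 P) := by
  have hlim : Tendsto (fun s : ℝ => (P.1 + δ / 2 + s, P.2 - δ / 2)) (𝓝[>] 0)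
      (𝓝 (P.1 + δ / 2, P.2 - δ / 2)) := by
    simpa using ((continuous_const.add continuous_id).prodMk continuous_const).tendsto
      (0 : ℝ) |>.mono_left nhdsWithin_le_nhds
  refine mem_closure_of_tendsto hlim ?_
  filter_upwards [Ioo_mem_nhdsGT (half_pos hδ)] with s ⟨hs0, hsδ⟩
  refine ⟨?_, ?_, ?_⟩
  · rw [mem_ball, Prod.dist_eq, Real.dist_eq, Real.dist_eq]
    dsimp only
    exact max_lt (abs_lt.mpr ⟨by linarith, by linarith⟩) (abs_lt.mpr ⟨by linarith, by linarith⟩)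
  · show P.2 - δ / 2 < P.2
    linarith
  · show P.1 + P.2 < P.1 + δ / 2 + s + (P.2 - δ / 2)
    linarith

lemma ptOrder_asymm {p q : ℝ × ℝ} (h : ptOrder p q) : ¬ ptOrder q p := by
  unfold ptOrder at *
  rcases h with h | ⟨h, h'⟩ <;> rintro (g | ⟨g, g'⟩) <;> linarith

lemma ne_of_ptOrder {p q : ℝ × ℝ} (h : ptOrder p q) : p ≠ q := by
  rintro rfl
  exact ptOrder_asymm h h

lemma ptOrder_add_sub_left {p : ℝ × ℝ} {t : ℝ} (ht : 0 < t) : ptOrder (p.1 + t, p.2 - t) p :=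
  Or.inr ⟨by ring, by simpa using ht⟩

variable {tri : Finset (R × C × S)} {f1 : R → ℚ} {f2 : C → ℚ} {f3 : S → ℚ} {P : ℝ × ℝ}

lemma piCount_eq_one_of_ptOrder
    (hPmin : ∀ Q ∈ closure (GammaHat tri f1 f2 f3), Q ≠ P → ptOrder P Q) {X : ℝ × ℝ}
    (hX : X ∈ GammaSet tri f1 f2 f3) (hXP : ptOrder X P) : piCount tri f1 f2 f3 X = 1 := by
  by_contra hπ
  exact ptOrder_asymm hXP (hPmin X (subset_closure ⟨hX, hπ⟩) (ne_of_ptOrder hXP))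

lemma exists_piCount_eq_one_on_sector13
    (hPmin : ∀ Q ∈ closure (GammaHat tri f1 f2 f3), Q ≠ P → ptOrder P Q)
    (hPint : P ∈ interior SigmaT) :
    ∃ δ > 0, ∀ X ∈ ball P δ ∩ sector13 P, piCount tri f1 f2 f3 X = 1 := by
  obtain ⟨δ, hδ, hball⟩ := Metric.eventually_nhds_iff_ball.mp
    ((isOpen_interior.eventually_mem hPint).and
      (eventually_sector13_disjoint_PiLines tri f1 f2 f3 P))
  set U := ball P δ ∩ sector13 P
  have hUΓ : U ⊆ GammaSet tri f1 f2 f3 := fun Y ⟨hYb, hYs⟩ =>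
    ⟨(hball Y hYb).1, fun hYpi => (hball Y hYb).2 hYs (PiSet_subset_PiLines _ _ _ _ hYpi)⟩
  have hUL : Disjoint U (PiLines tri f1 f2 f3) :=
    disjoint_left.mpr fun Y ⟨hYb, hYs⟩ => (hball Y hYb).2 hYs
  have hUconn : IsPreconnected U := ((convex_ball P δ).inter (convex_sector13 P)).isPreconnected
  refine ⟨δ, hδ, fun X hX => by_contra fun hπ => ?_⟩
  have hUhat : U ⊆ GammaHat tri f1 f2 f3 := fun Y hY =>
    ⟨hUΓ hY, by rwa [piCount_eq_of_isPreconnected hUconn hUL hY hX]⟩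
  have hQP := ptOrder_add_sub_left (p := P) (half_pos hδ)
  exact ptOrder_asymm hQP (hPmin _ (closure_mono hUhat (add_sub_mem_closure_ball_inter_sector13 hδ))
    (ne_of_ptOrder hQP))

end

theorem stmt6_general (tri : Finset (R × C × S))
    (f1 : R → ℚ) (f2 : C → ℚ) (f3 : S → ℚ)
    (P : ℝ × ℝ)
    (hPmin : ∀ Q ∈ closure (GammaHat tri f1 f2 f3), Q ≠ P → ptOrder P Q)
    (hPint : P ∈ interior SigmaT) :
    ∃ δ : ℝ, 0 < δ ∧ ∀ X ∈ GammaSet tri f1 f2 f3, dist X P < δ →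
      ((X.2 > P.2 ∧ X.1 + X.2 < P.1 + P.2) ∨       -- C₃₁
       (X.1 < P.1 ∧ X.2 < P.2) ∨                   -- C₂₁
       (X.1 > P.1 ∧ X.1 + X.2 < P.1 + P.2) ∨       -- C₂₃
       (X.2 < P.2 ∧ X.1 + X.2 > P.1 + P.2)) →      -- C₁₃
      piCount tri f1 f2 f3 X = 1 := by
  obtain ⟨δ, hδ, hsector13⟩ := exists_piCount_eq_one_on_sector13 hPmin hPint
  refine ⟨δ, hδ, fun X hX hXP hsec => ?_⟩
  rcases hsec with h | h | h | h
  · exact piCount_eq_one_of_ptOrder hPmin hX (Or.inl h.2)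
  · exact piCount_eq_one_of_ptOrder hPmin hX (Or.inl (by linarith [h.1, h.2]))
  · exact piCount_eq_one_of_ptOrder hPmin hX (Or.inl h.2)
  · exact hsector13 X ⟨hXP, h⟩

/-- **Lemma 3.4.** Near the minimal point `P = (α,β)` (an interior point of `Σ`),
`π(X) = 1` holds on the four sectors `C₃₁`, `C₂₁`, `C₂₃`, `C₁₃`. -/
theorem stmt6 (star tri : Finset (R × C × S)) (hsph : IsSphericalBitrade star tri)
    (a : R × C × S) (ha : a ∈ star)
    (f1 : R → ℚ) (f2 : C → ℚ) (f3 : S → ℚ)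
    (hsol : IsEqSolution star a f1 f2 f3)
    (hsep : SeparatedSolution star f1 f2 f3)
    (hne : (GammaHat tri f1 f2 f3).Nonempty)
    (P : ℝ × ℝ)
    (hP : P ∈ closure (GammaHat tri f1 f2 f3))
    (hPmin : ∀ Q ∈ closure (GammaHat tri f1 f2 f3), Q ≠ P → ptOrder P Q)
    (hPint : P ∈ interior SigmaT) :
    ∃ δ : ℝ, 0 < δ ∧ ∀ X ∈ GammaSet tri f1 f2 f3, dist X P < δ →
      ((X.2 > P.2 ∧ X.1 + X.2 < P.1 + P.2) ∨       -- C₃₁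
       (X.1 < P.1 ∧ X.2 < P.2) ∨                   -- C₂₁
       (X.1 > P.1 ∧ X.1 + X.2 < P.1 + P.2) ∨       -- C₂₃
       (X.2 < P.2 ∧ X.1 + X.2 > P.1 + P.2)) →      -- C₁₃
      piCount tri f1 f2 f3 X = 1 :=
  stmt6_general tri f1 f2 f3 P hPmin hPint
end

section
/- Let T = (T*, T△) be a separated latin bitrade. A triple c = (c1,c2,c3) is a trigon in T if and only if for every j ∈ {1,2,3} there exist α_j ∈ T* differing from c in exactly the j-th coordinate and an integer k_j with 2 ≤ k_j < ℓ_j such that τ_j^{k_j}(α_{j−1}) = α_{j+1}, where ℓ_j is the length of the cycle of τ_j that moves α_{j−1} and α_{j+1} (indices of α and τ computed modulo 3). -/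
open Function Set

variable {R C S : Type*} [DecidableEq R] [DecidableEq C] [DecidableEq S]

/-- `t` realizes the permutation `τ₁ = ν_{2,3}` of `T*`: for `p ∈ T*`, take `b ∈ T△`
differing from `p` exactly in the third coordinate; `t p` differs from `b` exactly in
the second coordinate. -/
def Tau1Spec (star tri : Finset (R × C × S)) (t : R × C × S → R × C × S) : Prop :=
  ∀ p ∈ star, t p ∈ star ∧
    ∃ b ∈ tri, (b.1 = p.1 ∧ b.2.1 = p.2.1 ∧ b.2.2 ≠ p.2.2) ∧
      ((t p).1 = b.1 ∧ (t p).2.2 = b.2.2 ∧ (t p).2.1 ≠ b.2.1)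

/-- `t` realizes the permutation `τ₂ = ν_{3,1}` of `T*`. -/
def Tau2Spec (star tri : Finset (R × C × S)) (t : R × C × S → R × C × S) : Prop :=
  ∀ p ∈ star, t p ∈ star ∧
    ∃ b ∈ tri, (b.2.1 = p.2.1 ∧ b.2.2 = p.2.2 ∧ b.1 ≠ p.1) ∧
      ((t p).1 = b.1 ∧ (t p).2.1 = b.2.1 ∧ (t p).2.2 ≠ b.2.2)

/-- `t` realizes the permutation `τ₃ = ν_{1,2}` of `T*`. -/
def Tau3Spec (star tri : Finset (R × C × S)) (t : R × C × S → R × C × S) : Prop :=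
  ∀ p ∈ star, t p ∈ star ∧
    ∃ b ∈ tri, (b.1 = p.1 ∧ b.2.2 = p.2.2 ∧ b.2.1 ≠ p.2.1) ∧
      ((t p).2.1 = b.2.1 ∧ (t p).2.2 = b.2.2 ∧ (t p).1 ≠ b.1)

/-- The bitrade is separated: for each `j`, the triples of `T*` sharing their `j`-th
coordinate form a single cycle of `τ_j`. -/
def SeparatedBitrade (star : Finset (R × C × S))
    (t1 t2 t3 : R × C × S → R × C × S) : Prop :=
  (∀ p ∈ star, ∀ q ∈ star, p.1 = q.1 → ∃ k : ℕ, t1^[k] p = q) ∧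
  (∀ p ∈ star, ∀ q ∈ star, p.2.1 = q.2.1 → ∃ k : ℕ, t2^[k] p = q) ∧
  (∀ p ∈ star, ∀ q ∈ star, p.2.2 = q.2.2 → ∃ k : ℕ, t3^[k] p = q)

/-- A trigon: a triple `c ∉ T*` whose three "corner triples" lie in `T△`. -/
def IsTrigon (star tri : Finset (R × C × S)) (c : R × C × S) : Prop :=
  c ∉ star ∧
    ∃ c1' c2' c3', c1' ≠ c.1 ∧ c2' ≠ c.2.1 ∧ c3' ≠ c.2.2 ∧
      (c.1, c.2.1, c3') ∈ tri ∧ (c.1, c2', c.2.2) ∈ tri ∧ (c1', c.2.1, c.2.2) ∈ tri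


theorem myIterMem {α : Type*} {s : Finset α} {t : α → α}
    (hm : ∀ p ∈ s, t p ∈ s) : ∀ n, ∀ p ∈ s, t^[n] p ∈ s := by
  intro n
  induction n with
  | zero => simp
  | succ n ih =>
    intro p hp
    rw [Function.iterate_succ_apply]
    exact ih _ (hm p hp)

theorem myIterInj {α : Type*} {s : Finset α} {t : α → α}
    (hm : ∀ p ∈ s, t p ∈ s)
    (hinj : ∀ p ∈ s, ∀ q ∈ s, t p = t q → p = q) :
    ∀ n, ∀ p ∈ s, ∀ q ∈ s, t^[n] p = t^[n] q → p = q := by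
  intro n
  induction n with
  | zero => simp
  | succ n ih =>
    intro p hp q hq h
    rw [Function.iterate_succ_apply, Function.iterate_succ_apply] at h
    exact hinj p hp q hq (ih _ (hm p hp) _ (hm q hq) h)

theorem myExistsPeriod {α : Type*} {s : Finset α} {t : α → α}
    (hm : ∀ p ∈ s, t p ∈ s)
    (hinj : ∀ p ∈ s, ∀ q ∈ s, t p = t q → p = q)
    {p : α} (hp : p ∈ s) : ∃ n, 0 < n ∧ t^[n] p = p := by
  have hmap : ∀ i ∈ Finset.range (s.card + 1), t^[i] p ∈ s :=
    fun i _ => myIterMem hm i p hp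
  have hcard : s.card < (Finset.range (s.card + 1)).card := by simp
  obtain ⟨i, hi, j, hj, hne, heq⟩ :=
    Finset.exists_ne_map_eq_of_card_lt_of_maps_to hcard hmap
  wlog hij : i < j generalizing i j
  · exact this j hj i hi hne.symm heq.symm (by omega)
  refine ⟨j - i, by omega, ?_⟩
  have key : t^[i] (t^[j - i] p) = t^[i] p := by
    rw [← Function.iterate_add_apply, show i + (j - i) = j by omega]
    exact heq.symm
  exact myIterInj hm hinj i _ (myIterMem hm _ p hp) p hp key

theorem myIterMod {α : Type*} {t : α → α} {p : α} {l : ℕ} (hl : t^[l] p = p) (k : ℕ) :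
    t^[k] p = t^[k % l] p := by
  conv_lhs => rw [← Nat.div_add_mod k l]
  generalize k / l = m
  induction m with
  | zero => simp
  | succ m ih =>
    rw [show l * (m + 1) + k % l = (l * m + k % l) + l by ring,
      Function.iterate_add_apply, hl, ih]

section MyHelpers

variable {star tri : Finset (R × C × S)}

theorem myLatinA (hbt : IsLatinBitrade star tri) {p q : R × C × S}
    (hp : p ∈ star) (hq : q ∈ star) (h1 : p.1 = q.1) (h2 : p.2.1 = q.2.1) : p = q := by
  obtain ⟨b, hb, -⟩ := hbt.r2a p hp
  exact (hbt.r3a b hb.1).unique ⟨hp, hb.2.1.symm, hb.2.2.symm⟩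
    ⟨hq, (hb.2.1.trans h1).symm, (hb.2.2.trans h2).symm⟩

theorem myLatinB (hbt : IsLatinBitrade star tri) {p q : R × C × S}
    (hp : p ∈ star) (hq : q ∈ star) (h1 : p.1 = q.1) (h2 : p.2.2 = q.2.2) : p = q := by
  obtain ⟨b, hb, -⟩ := hbt.r2b p hp
  exact (hbt.r3b b hb.1).unique ⟨hp, hb.2.1.symm, hb.2.2.symm⟩
    ⟨hq, (hb.2.1.trans h1).symm, (hb.2.2.trans h2).symm⟩

theorem myLatinC (hbt : IsLatinBitrade star tri) {p q : R × C × S}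
    (hp : p ∈ star) (hq : q ∈ star) (h1 : p.2.1 = q.2.1) (h2 : p.2.2 = q.2.2) : p = q := by
  obtain ⟨b, hb, -⟩ := hbt.r2c p hp
  exact (hbt.r3c b hb.1).unique ⟨hp, hb.2.1.symm, hb.2.2.symm⟩
    ⟨hq, (hb.2.1.trans h1).symm, (hb.2.2.trans h2).symm⟩

theorem myInj1 (hbt : IsLatinBitrade star tri) {t1 : R × C × S → R × C × S}
    (ht1 : Tau1Spec star tri t1) :
    ∀ p ∈ star, ∀ q ∈ star, t1 p = t1 q → p = q := by
  intro p hp q hq h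
  obtain ⟨hps, b, hb, ⟨hb1, hb2, -⟩, ha1, ha2, -⟩ := ht1 p hp
  obtain ⟨hqs, b', hb', ⟨hb'1, hb'2, -⟩, ha'1, ha'2, -⟩ := ht1 q hq
  have hbb : b = b' := (hbt.r2b (t1 p) hps).unique ⟨hb, ha1.symm, ha2.symm⟩
    ⟨hb', by rw [h]; exact ha'1.symm, by rw [h]; exact ha'2.symm⟩
  exact (hbt.r3a b hb).unique ⟨hp, hb1.symm, hb2.symm⟩
    ⟨hq, by rw [hbb]; exact hb'1.symm, by rw [hbb]; exact hb'2.symm⟩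

theorem myInj2 (hbt : IsLatinBitrade star tri) {t2 : R × C × S → R × C × S}
    (ht2 : Tau2Spec star tri t2) :
    ∀ p ∈ star, ∀ q ∈ star, t2 p = t2 q → p = q := by
  intro p hp q hq h
  obtain ⟨hps, b, hb, ⟨hb1, hb2, -⟩, ha1, ha2, -⟩ := ht2 p hp
  obtain ⟨hqs, b', hb', ⟨hb'1, hb'2, -⟩, ha'1, ha'2, -⟩ := ht2 q hq
  have hbb : b = b' := (hbt.r2a (t2 p) hps).unique ⟨hb, ha1.symm, ha2.symm⟩
    ⟨hb', by rw [h]; exact ha'1.symm, by rw [h]; exact ha'2.symm⟩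
  exact (hbt.r3c b hb).unique ⟨hp, hb1.symm, hb2.symm⟩
    ⟨hq, by rw [hbb]; exact hb'1.symm, by rw [hbb]; exact hb'2.symm⟩

theorem myInj3 (hbt : IsLatinBitrade star tri) {t3 : R × C × S → R × C × S}
    (ht3 : Tau3Spec star tri t3) :
    ∀ p ∈ star, ∀ q ∈ star, t3 p = t3 q → p = q := by
  intro p hp q hq h
  obtain ⟨hps, b, hb, ⟨hb1, hb2, -⟩, ha1, ha2, -⟩ := ht3 p hp
  obtain ⟨hqs, b', hb', ⟨hb'1, hb'2, -⟩, ha'1, ha'2, -⟩ := ht3 q hq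
  have hbb : b = b' := (hbt.r2c (t3 p) hps).unique ⟨hb, ha1.symm, ha2.symm⟩
    ⟨hb', by rw [h]; exact ha'1.symm, by rw [h]; exact ha'2.symm⟩
  exact (hbt.r3b b hb).unique ⟨hp, hb1.symm, hb2.symm⟩
    ⟨hq, by rw [hbb]; exact hb'1.symm, by rw [hbb]; exact hb'2.symm⟩

end MyHelpers

theorem tripleExt {p q : R × C × S} (h1 : p.1 = q.1) (h2 : p.2.1 = q.2.1)
    (h3 : p.2.2 = q.2.2) : p = q := by
  obtain ⟨x, y, z⟩ := p; obtain ⟨x', y', z'⟩ := q; simp_all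


/-- **Lemma 4.1 (T1).** Characterization of trigons in a separated latin bitrade:
`c` is a trigon iff for each `j` there are `α_j ∈ T*` differing from `c` exactly in the
`j`-th coordinate and `2 ≤ k_j < ℓ_j` with `τ_j^{k_j}(α_{j-1}) = α_{j+1}`, where `ℓ_j` is
the length of the cycle of `τ_j` that moves `α_{j±1}`. -/
theorem stmt8 (star tri : Finset (R × C × S)) (hbt : IsLatinBitrade star tri)
    (t1 t2 t3 : R × C × S → R × C × S)
    (ht1 : Tau1Spec star tri t1) (ht2 : Tau2Spec star tri t2) (ht3 : Tau3Spec star tri t3)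
    (hsep : SeparatedBitrade star t1 t2 t3)
    (c : R × C × S) :
    IsTrigon star tri c ↔
      ∃ α1 α2 α3 : R × C × S, α1 ∈ star ∧ α2 ∈ star ∧ α3 ∈ star ∧
        (α1.1 ≠ c.1 ∧ α1.2.1 = c.2.1 ∧ α1.2.2 = c.2.2) ∧
        (α2.1 = c.1 ∧ α2.2.1 ≠ c.2.1 ∧ α2.2.2 = c.2.2) ∧
        (α3.1 = c.1 ∧ α3.2.1 = c.2.1 ∧ α3.2.2 ≠ c.2.2) ∧
        ∃ k1 l1 k2 l2 k3 l3 : ℕ,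
          (0 < l1 ∧ t1^[l1] α3 = α3 ∧ (∀ m, 0 < m → m < l1 → t1^[m] α3 ≠ α3) ∧
            2 ≤ k1 ∧ k1 < l1 ∧ t1^[k1] α3 = α2) ∧
          (0 < l2 ∧ t2^[l2] α1 = α1 ∧ (∀ m, 0 < m → m < l2 → t2^[m] α1 ≠ α1) ∧
            2 ≤ k2 ∧ k2 < l2 ∧ t2^[k2] α1 = α3) ∧
          (0 < l3 ∧ t3^[l3] α2 = α2 ∧ (∀ m, 0 < m → m < l3 → t3^[m] α2 ≠ α2) ∧
            2 ≤ k3 ∧ k3 < l3 ∧ t3^[k3] α2 = α1) := by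
  have hm1 : ∀ p ∈ star, t1 p ∈ star := fun p hp => (ht1 p hp).1
  have hm2 : ∀ p ∈ star, t2 p ∈ star := fun p hp => (ht2 p hp).1
  have hm3 : ∀ p ∈ star, t3 p ∈ star := fun p hp => (ht3 p hp).1
  have hinj1 := myInj1 hbt ht1
  have hinj2 := myInj2 hbt ht2
  have hinj3 := myInj3 hbt ht3
  constructor
  · rintro ⟨hc, c1', c2', c3', hne1, hne2, hne3, hT3, hT2, hT1⟩
    -- construct the α's
    obtain ⟨α1, ⟨hα1s, hα1c, hα1e⟩, -⟩ := hbt.r3c _ hT1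
    obtain ⟨α2, ⟨hα2s, hα2r, hα2e⟩, -⟩ := hbt.r3b _ hT2
    obtain ⟨α3, ⟨hα3s, hα3r, hα3c⟩, -⟩ := hbt.r3a _ hT3
    have hα1c : α1.2.1 = c.2.1 := hα1c
    have hα1e : α1.2.2 = c.2.2 := hα1e
    have hα2r : α2.1 = c.1 := hα2r
    have hα2e : α2.2.2 = c.2.2 := hα2e
    have hα3r : α3.1 = c.1 := hα3r
    have hα3c : α3.2.1 = c.2.1 := hα3c
    have hα1r : α1.1 ≠ c.1 := fun h => hc (tripleExt h hα1c hα1e ▸ hα1s)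
    have hα2c : α2.2.1 ≠ c.2.1 := fun h => hc (tripleExt hα2r h hα2e ▸ hα2s)
    have hα3e : α3.2.2 ≠ c.2.2 := fun h => hc (tripleExt hα3r hα3c h ▸ hα3s)
    have hα1r' : α1.1 ≠ c1' := by
      intro h
      have he : α1 = (c1', c.2.1, c.2.2) := tripleExt h hα1c hα1e
      exact Finset.disjoint_left.mp hbt.disj hα1s (by rw [he]; exact hT1)
    have hα2c' : α2.2.1 ≠ c2' := by
      intro h
      have he : α2 = (c.1, c2', c.2.2) := tripleExt hα2r h hα2e
      exact Finset.disjoint_left.mp hbt.disj hα2s (by rw [he]; exact hT2)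
    have hα3e' : α3.2.2 ≠ c3' := by
      intro h
      have he : α3 = (c.1, c.2.1, c3') := tripleExt hα3r hα3c h
      exact Finset.disjoint_left.mp hbt.disj hα3s (by rw [he]; exact hT3)
    -- the first-step images of the τ's
    have hstep1 : (t1 α3).2.2 = c3' := by
      obtain ⟨-, b, hbtri, hb, -, htb, -⟩ := ht1 α3 hα3s
      have hbc : b = (c.1, c.2.1, c3') := (hbt.r2a α3 hα3s).unique ⟨hbtri, hb.1, hb.2.1⟩
        ⟨hT3, hα3r.symm, hα3c.symm⟩
      rw [htb, hbc]
    have hstep2 : (t2 α1).1 = c1' := by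
      obtain ⟨-, b, hbtri, hb, htb, -, -⟩ := ht2 α1 hα1s
      have hbc : b = (c1', c.2.1, c.2.2) := (hbt.r2c α1 hα1s).unique ⟨hbtri, hb.1, hb.2.1⟩
        ⟨hT1, hα1c.symm, hα1e.symm⟩
      rw [htb, hbc]
    have hstep3 : (t3 α2).2.1 = c2' := by
      obtain ⟨-, b, hbtri, hb, htb, -, -⟩ := ht3 α2 hα2s
      have hbc : b = (c.1, c2', c.2.2) := (hbt.r2b α2 hα2s).unique ⟨hbtri, hb.1, hb.2.1⟩
        ⟨hT2, hα2r.symm, hα2e.symm⟩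
      rw [htb, hbc]
    -- periods
    have hP1 : ∃ n, 0 < n ∧ t1^[n] α3 = α3 := myExistsPeriod hm1 hinj1 hα3s
    have hP2 : ∃ n, 0 < n ∧ t2^[n] α1 = α1 := myExistsPeriod hm2 hinj2 hα1s
    have hP3 : ∃ n, 0 < n ∧ t3^[n] α2 = α2 := myExistsPeriod hm3 hinj3 hα2s
    obtain ⟨hl1pos, hl1⟩ := Nat.find_spec hP1
    obtain ⟨hl2pos, hl2⟩ := Nat.find_spec hP2
    obtain ⟨hl3pos, hl3⟩ := Nat.find_spec hP3
    -- separation gives the connecting iterates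
    obtain ⟨k1, hk1⟩ := hsep.1 α3 hα3s α2 hα2s (hα3r.trans hα2r.symm)
    obtain ⟨k2, hk2⟩ := hsep.2.1 α1 hα1s α3 hα3s (hα1c.trans hα3c.symm)
    obtain ⟨k3, hk3⟩ := hsep.2.2 α2 hα2s α1 hα1s (hα2e.trans hα1e.symm)
    have hk1' : t1^[k1 % Nat.find hP1] α3 = α2 := (myIterMod hl1 k1) ▸ hk1
    have hk2' : t2^[k2 % Nat.find hP2] α1 = α3 := (myIterMod hl2 k2) ▸ hk2
    have hk3' : t3^[k3 % Nat.find hP3] α2 = α1 := (myIterMod hl3 k3) ▸ hk3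
    have h1ne0 : k1 % Nat.find hP1 ≠ 0 := fun h => by
      rw [h, Function.iterate_zero_apply] at hk1'
      exact hα3e (by rw [hk1', hα2e])
    have h1ne1 : k1 % Nat.find hP1 ≠ 1 := fun h => by
      rw [h, Function.iterate_one] at hk1'
      exact hne3 (by rw [← hstep1, hk1', hα2e])
    have h2ne0 : k2 % Nat.find hP2 ≠ 0 := fun h => by
      rw [h, Function.iterate_zero_apply] at hk2'
      exact hα1r (by rw [hk2', hα3r])
    have h2ne1 : k2 % Nat.find hP2 ≠ 1 := fun h => by
      rw [h, Function.iterate_one] at hk2'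
      exact hne1 (by rw [← hstep2, hk2', hα3r])
    have h3ne0 : k3 % Nat.find hP3 ≠ 0 := fun h => by
      rw [h, Function.iterate_zero_apply] at hk3'
      exact hα2c (by rw [hk3', hα1c])
    have h3ne1 : k3 % Nat.find hP3 ≠ 1 := fun h => by
      rw [h, Function.iterate_one] at hk3'
      exact hne2 (by rw [← hstep3, hk3', hα1c])
    refine ⟨α1, α2, α3, hα1s, hα2s, hα3s, ⟨hα1r, hα1c, hα1e⟩, ⟨hα2r, hα2c, hα2e⟩,
      ⟨hα3r, hα3c, hα3e⟩,
      k1 % Nat.find hP1, Nat.find hP1, k2 % Nat.find hP2, Nat.find hP2,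
      k3 % Nat.find hP3, Nat.find hP3,
      ⟨hl1pos, hl1, fun m hm hml hcon => Nat.find_min hP1 hml ⟨hm, hcon⟩,
        by omega, Nat.mod_lt _ hl1pos, hk1'⟩,
      ⟨hl2pos, hl2, fun m hm hml hcon => Nat.find_min hP2 hml ⟨hm, hcon⟩,
        by omega, Nat.mod_lt _ hl2pos, hk2'⟩,
      ⟨hl3pos, hl3, fun m hm hml hcon => Nat.find_min hP3 hml ⟨hm, hcon⟩,
        by omega, Nat.mod_lt _ hl3pos, hk3'⟩⟩
  · rintro ⟨α1, α2, α3, hα1s, hα2s, hα3s, ⟨hα1r, hα1c, hα1e⟩, ⟨hα2r, hα2c, hα2e⟩,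
      ⟨hα3r, hα3c, hα3e⟩, k1, l1, k2, l2, k3, l3,
      ⟨hl1pos, hl1, hl1min, hk1ge, hk1lt, hk1⟩,
      ⟨hl2pos, hl2, hl2min, hk2ge, hk2lt, hk2⟩,
      ⟨hl3pos, hl3, hl3min, hk3ge, hk3lt, hk3⟩⟩
    have hc : c ∉ star := by
      intro hcs
      have hce := myLatinC hbt hcs hα1s hα1c.symm hα1e.symm
      exact hα1r (by rw [← hce])
    -- corner 3: above α3
    obtain ⟨b3, ⟨hb3tri, hb31, hb32⟩, -⟩ := hbt.r2a α3 hα3s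
    have hb3e : b3.2.2 ≠ c.2.2 := by
      intro h
      obtain ⟨hts, b, hbtri, hb, hta, htb, -⟩ := ht1 α3 hα3s
      have hbb : b = b3 := (hbt.r2a α3 hα3s).unique ⟨hbtri, hb.1, hb.2.1⟩
        ⟨hb3tri, hb31, hb32⟩
      have heq : t1 α3 = α2 := myLatinB hbt hts hα2s
        (by rw [hta, hbb, hb31, hα3r, hα2r]) (by rw [htb, hbb, h, hα2e])
      have : t1^[k1 - 1] α3 = α3 := by
        apply hinj1 _ (myIterMem hm1 _ _ hα3s) _ hα3s
        have h4 : t1 (t1^[k1 - 1] α3) = t1^[k1] α3 := by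
          conv_rhs => rw [show k1 = (k1 - 1) + 1 by omega]
          rw [Function.iterate_succ_apply']
        rw [h4, hk1, heq]
      exact hl1min (k1 - 1) (by omega) (by omega) this
    -- corner 2: above α2
    obtain ⟨b2, ⟨hb2tri, hb21, hb22⟩, -⟩ := hbt.r2b α2 hα2s
    have hb2c : b2.2.1 ≠ c.2.1 := by
      intro h
      obtain ⟨hts, b, hbtri, hb, hta, htb, -⟩ := ht3 α2 hα2s
      have hbb : b = b2 := (hbt.r2b α2 hα2s).unique ⟨hbtri, hb.1, hb.2.1⟩
        ⟨hb2tri, hb21, hb22⟩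
      have heq : t3 α2 = α1 := myLatinC hbt hts hα1s
        (by rw [hta, hbb, h, hα1c]) (by rw [htb, hbb, hb22, hα2e, hα1e])
      have : t3^[k3 - 1] α2 = α2 := by
        apply hinj3 _ (myIterMem hm3 _ _ hα2s) _ hα2s
        have h4 : t3 (t3^[k3 - 1] α2) = t3^[k3] α2 := by
          conv_rhs => rw [show k3 = (k3 - 1) + 1 by omega]
          rw [Function.iterate_succ_apply']
        rw [h4, hk3, heq]
      exact hl3min (k3 - 1) (by omega) (by omega) this
    -- corner 1: above α1
    obtain ⟨b1, ⟨hb1tri, hb11, hb12⟩, -⟩ := hbt.r2c α1 hα1s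
    have hb1r : b1.1 ≠ c.1 := by
      intro h
      obtain ⟨hts, b, hbtri, hb, hta, htb, -⟩ := ht2 α1 hα1s
      have hbb : b = b1 := (hbt.r2c α1 hα1s).unique ⟨hbtri, hb.1, hb.2.1⟩
        ⟨hb1tri, hb11, hb12⟩
      have heq : t2 α1 = α3 := myLatinA hbt hts hα3s
        (by rw [hta, hbb, h, hα3r]) (by rw [htb, hbb, hb11, hα1c, hα3c])
      have : t2^[k2 - 1] α1 = α1 := by
        apply hinj2 _ (myIterMem hm2 _ _ hα1s) _ hα1s
        have h4 : t2 (t2^[k2 - 1] α1) = t2^[k2] α1 := by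
          conv_rhs => rw [show k2 = (k2 - 1) + 1 by omega]
          rw [Function.iterate_succ_apply']
        rw [h4, hk2, heq]
      exact hl2min (k2 - 1) (by omega) (by omega) this
    refine ⟨hc, b1.1, b2.2.1, b3.2.2, hb1r, hb2c, hb3e, ?_, ?_, ?_⟩
    · have : (c.1, c.2.1, b3.2.2) = b3 :=
        tripleExt (by simp [hb31, hα3r]) (by simp [hb32, hα3c]) rfl
      rw [this]; exact hb3tri
    · have : (c.1, b2.2.1, c.2.2) = b2 :=
        tripleExt (by simp [hb21, hα2r]) rfl (by simp [hb22, hα2e])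
      rw [this]; exact hb2tri
    · have : (b1.1, c.2.1, c.2.2) = b1 :=
        tripleExt rfl (by simp [hb11, hα1c]) (by simp [hb12, hα1e])
      rw [this]; exact hb1tri
end

section
/- Let T = (T*, T△) be a spherical latin bitrade with equation matrix B. If either 1 ≤ i ≤ o1 < j ≤ m or o1 < i ≤ o1 + o2 < j ≤ m, then |det B_{ij}| = |det B_{1m}|. -/
/-!
A vector that is constant on the row, column and symbol blocks of variables, with values
`gR, gC, gS` satisfying `gR + gC = gS`, lies in the kernel of `B`. For an `n × (n + 1)` matrix
`A`, every kernel vector `v` satisfies `v a * Δ_b = v b * Δ_a`, where `Δ_p` is the signed maximal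
minor omitting column `p` (border `A` by a row and multiply by the adjugate). Hence if `v ∈ ker B`
vanishes at column `c` and `|v a| = |v b| ≠ 0`, the minors of `B` deleting `{c, a}` and `{c, b}`
agree in absolute value. With `v = (1, -1, 0)` or `(1, 0, 1)` (vanishing on the block of `j`) the
pair `{i, j}` moves to `{0, j}`, and with `v = (0, 1, 1)` the pair `{0, j}` moves to `{0, m - 1}`.
-/

open Function Set

variable {R C S : Type*} [DecidableEq R] [DecidableEq C] [DecidableEq S]

open Matrix

theorem Fin.succAbove_succAbove_zero_eq {n : ℕ} {c : Fin (n + 2)} (hc : c ≠ 0) :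
    (fun k => c.succAbove ((0 : Fin (n + 1)).succAbove k)) =
      fun k : Fin n => (0 : Fin (n + 2)).succAbove ((c.pred hc).succAbove k) :=
  funext fun k => by simpa using Fin.succAbove_succAbove_succAbove_predAbove 0 (c.pred hc) k

namespace Matrix

variable {K : Type*} [CommRing K] {n : ℕ}

def signedMaxMinors (A : Matrix (Fin n) (Fin (n + 1)) K) (p : Fin (n + 1)) : K :=
  (-1) ^ (p : ℕ) * (A.submatrix id p.succAbove).det

theorem smul_eq_smul_signedMaxMinors {A : Matrix (Fin n) (Fin (n + 1)) K} {v : Fin (n + 1) → K}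
    (hv : A *ᵥ v = 0) (u : Fin (n + 1) → K) :
    (u ⬝ᵥ signedMaxMinors A) • v = (u ⬝ᵥ v) • signedMaxMinors A := by
  set M : Matrix (Fin (n + 1)) (Fin (n + 1)) K := of (Fin.cons u A)
  have hdet : M.det = u ⬝ᵥ signedMaxMinors A := by
    rw [det_succ_row_zero, dotProduct]
    refine Finset.sum_congr rfl fun p _ => ?_
    rw [signedMaxMinors, mul_left_comm, ← mul_assoc]
    rfl
  have hMv : M *ᵥ v = Pi.single 0 (u ⬝ᵥ v) := by
    ext r
    refine Fin.cases ?_ (fun r => ?_) r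
    · rfl
    · exact congr_fun hv r
  have hadj (p : Fin (n + 1)) : M.adjugate p 0 = signedMaxMinors A p := by
    rw [adjugate_fin_succ_eq_det_submatrix]
    simp [signedMaxMinors, M]
    rfl
  calc (u ⬝ᵥ signedMaxMinors A) • v = M.adjugate *ᵥ (M *ᵥ v) := by
        rw [mulVec_mulVec, adjugate_mul, smul_mulVec, one_mulVec, hdet]
    _ = (u ⬝ᵥ v) • signedMaxMinors A := by
        ext p
        simp [hMv, mulVec, dotProduct_single, hadj, mul_comm]

theorem mul_signedMaxMinors_comm {A : Matrix (Fin n) (Fin (n + 1)) K} {v : Fin (n + 1) → K}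
    (hv : A *ᵥ v = 0) (a b : Fin (n + 1)) :
    v a * signedMaxMinors A b = v b * signedMaxMinors A a := by
  have := congr_fun (smul_eq_smul_signedMaxMinors hv (Pi.single a 1)) b
  simp only [single_dotProduct, one_mul, Pi.smul_apply, smul_eq_mul] at this
  rw [← this, mul_comm]

section Ordered

variable [LinearOrder K] [IsStrictOrderedRing K]

theorem abs_det_submatrix_succAbove_eq {A : Matrix (Fin n) (Fin (n + 1)) K}
    {v : Fin (n + 1) → K} (hv : A *ᵥ v = 0) {a b : Fin (n + 1)} (hab : |v a| = |v b|)
    (ha : v a ≠ 0) :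
    |(A.submatrix id a.succAbove).det| = |(A.submatrix id b.succAbove).det| := by
  have key := congr_arg abs (mul_signedMaxMinors_comm hv a b)
  simp only [signedMaxMinors, abs_mul, abs_pow, abs_neg, abs_one, one_pow, one_mul, hab] at key
  exact (mul_left_cancel₀ (hab ▸ abs_ne_zero.mpr ha) key).symm

theorem abs_det_submatrix_succAbove_succAbove_eq {B : Matrix (Fin n) (Fin (n + 2)) K}
    {v : Fin (n + 2) → K} (hv : B *ᵥ v = 0) {c : Fin (n + 2)} (hc : v c = 0)
    {a b : Fin (n + 1)} (hab : |v (c.succAbove a)| = |v (c.succAbove b)|)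
    (ha : v (c.succAbove a) ≠ 0) :
    |(B.submatrix id fun k => c.succAbove (a.succAbove k)).det| =
      |(B.submatrix id fun k => c.succAbove (b.succAbove k)).det| := by
  have hv' : B.submatrix id c.succAbove *ᵥ (v ∘ c.succAbove) = 0 := by
    rw [← hv]
    ext r
    simp [mulVec, dotProduct, Fin.sum_univ_succAbove _ c, hc]
  exact abs_det_submatrix_succAbove_eq hv' hab ha

end Ordered

end Matrix

section BlockVec

variable {K : Type*} [CommRing K] {m : ℕ}

def blockVec (o1 o2 : ℕ) (gR gC gS : K) (x : Fin m) : K :=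
  if (x : ℕ) < o1 then gR else if (x : ℕ) < o1 + o2 then gC else gS

theorem mulVec_blockVec_eq_zero {ι : Type*} {o1 o2 : ℕ} {B : Matrix ι (Fin m) K}
    {x y z : ι → Fin m} (hx : ∀ k, (x k : ℕ) < o1)
    (hy : ∀ k, o1 ≤ (y k : ℕ) ∧ (y k : ℕ) < o1 + o2) (hz : ∀ k, o1 + o2 ≤ (z k : ℕ))
    (hB : ∀ k j, B k j = (if j = x k then 1 else 0) + (if j = y k then 1 else 0)
      - (if j = z k then 1 else 0))
    {gR gC gS : K} (hg : gR + gC = gS) :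
    B *ᵥ blockVec o1 o2 gR gC gS = 0 := by
  ext k
  simp only [mulVec, dotProduct, hB, add_mul, sub_mul, ite_mul, one_mul, zero_mul,
    Finset.sum_sub_distrib, Finset.sum_add_distrib, Finset.sum_ite_eq', Finset.mem_univ, if_true]
  have hzk : ¬ (z k : ℕ) < o1 := by have := hz k; omega
  simp [blockVec, hx k, (hy k).2, not_lt.mpr (hy k).1, not_lt.mpr (hz k), hzk, hg]

end BlockVec

theorem stmt12_general
    (star : Finset (R × C × S))
    (s o1 o2 : ℕ)
    (eqn : Fin s ≃ {p : R × C × S // p ∈ star})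
    (var : (R ⊕ C ⊕ S) ≃ Fin (s + 2))
    (hvarR : ∀ r : R, ((var (Sum.inl r)) : ℕ) < o1)
    (hvarC : ∀ c : C, o1 ≤ ((var (Sum.inr (Sum.inl c))) : ℕ) ∧
      ((var (Sum.inr (Sum.inl c))) : ℕ) < o1 + o2)
    (hvarS : ∀ y : S, o1 + o2 ≤ ((var (Sum.inr (Sum.inr y))) : ℕ))
    (B : Matrix (Fin s) (Fin (s + 2)) ℤ)
    (hB : ∀ (k : Fin s) (j : Fin (s + 2)),
      B k j = (if j = var (Sum.inl (eqn k).1.1) then 1 else 0)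
            + (if j = var (Sum.inr (Sum.inl (eqn k).1.2.1)) then 1 else 0)
            - (if j = var (Sum.inr (Sum.inr (eqn k).1.2.2)) then 1 else 0)) :
    ∀ (i j : Fin (s + 2)) (hij : (i : ℕ) < (j : ℕ)),
      (((i : ℕ) < o1 ∧ o1 ≤ (j : ℕ)) ∨
        (o1 ≤ (i : ℕ) ∧ (i : ℕ) < o1 + o2 ∧ o1 + o2 ≤ (j : ℕ))) →
      |(B.submatrix id (fun k : Fin s => j.succAbove
          ((⟨(i : ℕ), Nat.lt_of_lt_of_le hij (Nat.lt_succ_iff.mp j.isLt)⟩ :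
            Fin (s + 1)).succAbove k))).det| =
      |(B.submatrix id (fun k : Fin s => (Fin.last (s + 1)).succAbove
          ((0 : Fin (s + 1)).succAbove k))).det| := by
  intro i j hij hcase
  rcases Nat.eq_zero_or_pos s with rfl | hs
  · simp
  -- any equation provides a row variable and a symbol variable, so `0` is a row and `s + 1` a symbol
  obtain ⟨⟨r, -, y⟩, -⟩ := eqn ⟨0, hs⟩
  have hR : 0 < o1 := (Nat.zero_le _).trans_lt (hvarR r)
  have hS : o1 + o2 ≤ s + 1 := (hvarS y).trans (Nat.lt_succ_iff.mp (var _).isLt)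
  have hker {gR gC gS : ℤ} (hg : gR + gC = gS) : B *ᵥ blockVec o1 o2 gR gC gS = 0 :=
    mulVec_blockVec_eq_zero (fun _ => hvarR _) (fun _ => hvarC _) (fun _ => hvarS _) hB hg
  have hj : j ≠ 0 := Fin.ne_of_gt (Fin.lt_def.mpr (Nat.zero_lt_of_lt hij))
  have hji : j.succAbove ⟨i, by omega⟩ = i := Fin.succAbove_of_castSucc_lt _ _ hij
  have hj0 : j.succAbove 0 = 0 := Fin.succAbove_of_castSucc_lt _ _ (Nat.zero_lt_of_lt hij)
  have hjR : ¬ (j : ℕ) < o1 := by omega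
  have hlastR : ¬ s + 1 < o1 := by omega
  have hlast : ¬ s + 1 < o1 + o2 := by omega
  calc _ = |(B.submatrix id fun k => j.succAbove ((0 : Fin (s + 1)).succAbove k)).det| := by
        by_cases hjS : o1 + o2 ≤ (j : ℕ)
        · have hi : (i : ℕ) < o1 + o2 := by omega
          refine abs_det_submatrix_succAbove_succAbove_eq (hker (gR := 1) (gC := -1) (gS := 0)
            (by norm_num)) ?_ ?_ ?_ <;> simp only [hji, hj0, blockVec] <;>
            simp [hR, hjR, hjS, hi] <;> split_ifs <;> simp
        · have hiR : (i : ℕ) < o1 := by omega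
          refine abs_det_submatrix_succAbove_succAbove_eq (hker (gR := 1) (gC := 0) (gS := 1)
            (by norm_num)) ?_ ?_ ?_ <;> simp only [hji, hj0, blockVec] <;> simp [hR, hjR, hjS, hiR]
    _ = _ := by
        rw [Fin.succAbove_succAbove_zero_eq hj, Fin.succAbove_succAbove_zero_eq Fin.last_pos'.ne']
        refine abs_det_submatrix_succAbove_succAbove_eq (hker (gR := 0) (gC := 1) (gS := 1)
          (by norm_num)) ?_ ?_ ?_ <;> simp [blockVec, hR, hjR, hlast, hlastR]

/-- **Lemma 4.1 (Lemma 41).** Deleting from the equation matrix `B` of a spherical latin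
bitrade a row-column and any later column, or a column-column and a symbol-column, yields
a square matrix whose determinant has the same absolute value as `det B_{1m}`.

Here `s = |T*|`, `m = s + 2`, `eqn` enumerates the equations (rows of `B`), `var`
labels the variables `x₁,…,x_m` so that rows come first, then columns, then symbols
(`o1`, `o2`, `o3` many of each), and `hB` says that `B` is the matrix of `Eq(T)`. -/
theorem stmt12 [Fintype R] [Fintype C] [Fintype S]
    (star tri : Finset (R × C × S)) (hsph : IsSphericalBitrade star tri)
    (hcovR : ∀ r : R, ∃ p ∈ star, p.1 = r)
    (hcovC : ∀ c : C, ∃ p ∈ star, p.2.1 = c)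
    (hcovS : ∀ s : S, ∃ p ∈ star, p.2.2 = s)
    (s o1 o2 o3 : ℕ) (hs : star.card = s)
    (ho1 : Fintype.card R = o1) (ho2 : Fintype.card C = o2) (ho3 : Fintype.card S = o3)
    (eqn : Fin s ≃ {p : R × C × S // p ∈ star})
    (var : (R ⊕ C ⊕ S) ≃ Fin (s + 2))
    (hvarR : ∀ r : R, ((var (Sum.inl r)) : ℕ) < o1)
    (hvarC : ∀ c : C, o1 ≤ ((var (Sum.inr (Sum.inl c))) : ℕ) ∧
      ((var (Sum.inr (Sum.inl c))) : ℕ) < o1 + o2)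
    (hvarS : ∀ y : S, o1 + o2 ≤ ((var (Sum.inr (Sum.inr y))) : ℕ))
    (B : Matrix (Fin s) (Fin (s + 2)) ℤ)
    (hB : ∀ (k : Fin s) (j : Fin (s + 2)),
      B k j = (if j = var (Sum.inl (eqn k).1.1) then 1 else 0)
            + (if j = var (Sum.inr (Sum.inl (eqn k).1.2.1)) then 1 else 0)
            - (if j = var (Sum.inr (Sum.inr (eqn k).1.2.2)) then 1 else 0)) :
    ∀ (i j : Fin (s + 2)) (hij : (i : ℕ) < (j : ℕ)),
      (((i : ℕ) < o1 ∧ o1 ≤ (j : ℕ)) ∨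
        (o1 ≤ (i : ℕ) ∧ (i : ℕ) < o1 + o2 ∧ o1 + o2 ≤ (j : ℕ))) →
      |(B.submatrix id (fun k : Fin s => j.succAbove
          ((⟨(i : ℕ), Nat.lt_of_lt_of_le hij (Nat.lt_succ_iff.mp j.isLt)⟩ :
            Fin (s + 1)).succAbove k))).det| =
      |(B.submatrix id (fun k : Fin s => (Fin.last (s + 1)).succAbove
          ((0 : Fin (s + 1)).succAbove k))).det| :=
  stmt12_general star s o1 o2 eqn var hvarR hvarC hvarS B hB
end

section
/- Let T = (T*, T△) be a spherical latin bitrade and let (σ1,σ2,σ3) be a homotopy of T(*) into the additive group of integers ℤ. Then σ_i(a_i) = σ_i(b_i) for all (a1,a2,a3), (b1,b2,b3) ∈ T* and every i ∈ {1,2,3}; that is, every homotopy of T(*) into ℤ is trivial. -/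
open Function Set

variable {R C S : Type*} [DecidableEq R] [DecidableEq C] [DecidableEq S]

/-- A homotopy of `T(*)` into an abelian group `G`: `σ₁(b₁) + σ₂(b₂) = σ₃(b₃)` for
every `(b₁,b₂,b₃) ∈ T*`. -/
def IsHomotopy (G : Type*) [AddCommGroup G] (star : Finset (R × C × S))
    (σ1 : R → G) (σ2 : C → G) (σ3 : S → G) : Prop :=
  ∀ p ∈ star, σ1 p.1 + σ2 p.2.1 = σ3 p.2.2

/-- Auxiliary: the condition that a triple of `star` and a triple of `tri` agree in (at
least) two coordinate places. -/
def BitradeShare (p q : R × C × S) : Prop :=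
  (p.1 = q.1 ∧ p.2.1 = q.2.1) ∨ (p.1 = q.1 ∧ p.2.2 = q.2.2) ∨
    (p.2.1 = q.2.1 ∧ p.2.2 = q.2.2)

/-- Auxiliary: filtering both parts of a latin bitrade by a predicate which is invariant
under the "share two coordinates" relation again yields a latin bitrade. -/
theorem bitrade_filter {star tri : Finset (R × C × S)} (hB : IsLatinBitrade star tri)
    (P : R × C × S → Prop) [DecidablePred P]
    (hP : ∀ p ∈ star, ∀ q ∈ tri, BitradeShare p q → (P p ↔ P q)) :
    IsLatinBitrade (star.filter P) (tri.filter P) := by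
  constructor
  · exact hB.disj.mono (Finset.filter_subset _ _) (Finset.filter_subset _ _)
  · intro p hp
    obtain ⟨hps, hPp⟩ := Finset.mem_filter.mp hp
    obtain ⟨q, hq, hu⟩ := hB.r2a p hps
    exact ⟨q, ⟨Finset.mem_filter.mpr ⟨hq.1,
        (hP p hps q hq.1 (Or.inl ⟨hq.2.1.symm, hq.2.2.symm⟩)).mp hPp⟩, hq.2⟩,
      fun y hy => hu y ⟨(Finset.mem_filter.mp hy.1).1, hy.2⟩⟩
  · intro p hp
    obtain ⟨hps, hPp⟩ := Finset.mem_filter.mp hp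
    obtain ⟨q, hq, hu⟩ := hB.r2b p hps
    exact ⟨q, ⟨Finset.mem_filter.mpr ⟨hq.1,
        (hP p hps q hq.1 (Or.inr (Or.inl ⟨hq.2.1.symm, hq.2.2.symm⟩))).mp hPp⟩, hq.2⟩,
      fun y hy => hu y ⟨(Finset.mem_filter.mp hy.1).1, hy.2⟩⟩
  · intro p hp
    obtain ⟨hps, hPp⟩ := Finset.mem_filter.mp hp
    obtain ⟨q, hq, hu⟩ := hB.r2c p hps
    exact ⟨q, ⟨Finset.mem_filter.mpr ⟨hq.1,
        (hP p hps q hq.1 (Or.inr (Or.inr ⟨hq.2.1.symm, hq.2.2.symm⟩))).mp hPp⟩, hq.2⟩,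
      fun y hy => hu y ⟨(Finset.mem_filter.mp hy.1).1, hy.2⟩⟩
  · intro q hq
    obtain ⟨hqt, hPq⟩ := Finset.mem_filter.mp hq
    obtain ⟨p, hp, hu⟩ := hB.r3a q hqt
    exact ⟨p, ⟨Finset.mem_filter.mpr ⟨hp.1,
        (hP p hp.1 q hqt (Or.inl ⟨hp.2.1, hp.2.2⟩)).mpr hPq⟩, hp.2⟩,
      fun y hy => hu y ⟨(Finset.mem_filter.mp hy.1).1, hy.2⟩⟩
  · intro q hq
    obtain ⟨hqt, hPq⟩ := Finset.mem_filter.mp hq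
    obtain ⟨p, hp, hu⟩ := hB.r3b q hqt
    exact ⟨p, ⟨Finset.mem_filter.mpr ⟨hp.1,
        (hP p hp.1 q hqt (Or.inr (Or.inl ⟨hp.2.1, hp.2.2⟩))).mpr hPq⟩, hp.2⟩,
      fun y hy => hu y ⟨(Finset.mem_filter.mp hy.1).1, hy.2⟩⟩
  · intro q hq
    obtain ⟨hqt, hPq⟩ := Finset.mem_filter.mp hq
    obtain ⟨p, hp, hu⟩ := hB.r3c q hqt
    exact ⟨p, ⟨Finset.mem_filter.mpr ⟨hp.1,
        (hP p hp.1 q hqt (Or.inr (Or.inr ⟨hp.2.1, hp.2.2⟩))).mpr hPq⟩, hp.2⟩,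
      fun y hy => hu y ⟨(Finset.mem_filter.mp hy.1).1, hy.2⟩⟩

/-- Auxiliary: for an indecomposable latin bitrade, any predicate invariant under the
"share two coordinates" relation, which holds at some triple of `star`, holds at every
triple of `star`. -/
theorem bitrade_indec_const {star tri : Finset (R × C × S)} (hB : IsLatinBitrade star tri)
    (hind : BitradeIndecomposable star tri) (P : R × C × S → Prop)
    (hP : ∀ p ∈ star, ∀ q ∈ tri, BitradeShare p q → (P p ↔ P q))
    {a : R × C × S} (ha : a ∈ star) (hPa : P a) : ∀ b ∈ star, P b := by
  classical
  intro b hb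
  by_contra hPb
  have hP' : ∀ p ∈ star, ∀ q ∈ tri, BitradeShare p q → (¬ P p ↔ ¬ P q) :=
    fun p hp q hq hs => (hP p hp q hq hs).not
  exact hind ⟨star.filter P, tri.filter P, star.filter (fun t => ¬ P t),
    tri.filter (fun t => ¬ P t),
    ⟨a, Finset.mem_filter.mpr ⟨ha, hPa⟩⟩,
    ⟨b, Finset.mem_filter.mpr ⟨hb, hPb⟩⟩,
    Finset.disjoint_filter_filter_not star star P,
    Finset.disjoint_filter_filter_not tri tri P,
    Finset.filter_union_filter_not_eq P star,
    Finset.filter_union_filter_not_eq P tri,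
    bitrade_filter hB P hP, bitrade_filter hB (fun t => ¬ P t) hP'⟩

/-- **Lemma 4.2 (Lemma 42).** Every homotopy of the `T(*)` of a spherical latin bitrade
into the additive group of integers is trivial. -/
theorem stmt13 (star tri : Finset (R × C × S)) (hsph : IsSphericalBitrade star tri)
    (σ1 : R → ℤ) (σ2 : C → ℤ) (σ3 : S → ℤ)
    (hσ : IsHomotopy ℤ star σ1 σ2 σ3) :
    ∀ a ∈ star, ∀ b ∈ star,
      σ1 a.1 = σ1 b.1 ∧ σ2 a.2.1 = σ2 b.2.1 ∧ σ3 a.2.2 = σ3 b.2.2 := by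
  classical
  obtain ⟨hB, hind, -⟩ := hsph
  intro a ha b hb
  -- total versions of the six unique matching maps
  choose fa hfa hfau using hB.r2a
  choose fb hfb hfbu using hB.r2b
  choose fc hfc hfcu using hB.r2c
  choose ga hga hgau using hB.r3a
  choose gb hgb hgbu using hB.r3b
  choose gc hgc hgcu using hB.r3c
  set Fa : R × C × S → R × C × S := fun p => if hp : p ∈ star then fa p hp else p with hFa
  set Fb : R × C × S → R × C × S := fun p => if hp : p ∈ star then fb p hp else p with hFb
  set Fc : R × C × S → R × C × S := fun p => if hp : p ∈ star then fc p hp else p with hFc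
  set Ga : R × C × S → R × C × S := fun q => if hq : q ∈ tri then ga q hq else q with hGa
  set Gb : R × C × S → R × C × S := fun q => if hq : q ∈ tri then gb q hq else q with hGb
  set Gc : R × C × S → R × C × S := fun q => if hq : q ∈ tri then gc q hq else q with hGc
  have hFa1 : ∀ p ∈ star, Fa p ∈ tri ∧ (Fa p).1 = p.1 ∧ (Fa p).2.1 = p.2.1 := by
    intro p hp; simp only [hFa, dif_pos hp]; exact hfa p hp
  have hFb1 : ∀ p ∈ star, Fb p ∈ tri ∧ (Fb p).1 = p.1 ∧ (Fb p).2.2 = p.2.2 := by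
    intro p hp; simp only [hFb, dif_pos hp]; exact hfb p hp
  have hFc1 : ∀ p ∈ star, Fc p ∈ tri ∧ (Fc p).2.1 = p.2.1 ∧ (Fc p).2.2 = p.2.2 := by
    intro p hp; simp only [hFc, dif_pos hp]; exact hfc p hp
  have hGa1 : ∀ q ∈ tri, Ga q ∈ star ∧ (Ga q).1 = q.1 ∧ (Ga q).2.1 = q.2.1 := by
    intro q hq; simp only [hGa, dif_pos hq]; exact hga q hq
  have hGb1 : ∀ q ∈ tri, Gb q ∈ star ∧ (Gb q).1 = q.1 ∧ (Gb q).2.2 = q.2.2 := by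
    intro q hq; simp only [hGb, dif_pos hq]; exact hgb q hq
  have hGc1 : ∀ q ∈ tri, Gc q ∈ star ∧ (Gc q).2.1 = q.2.1 ∧ (Gc q).2.2 = q.2.2 := by
    intro q hq; simp only [hGc, dif_pos hq]; exact hgc q hq
  have hFau : ∀ p ∈ star, ∀ y, y ∈ tri ∧ y.1 = p.1 ∧ y.2.1 = p.2.1 → y = Fa p := by
    intro p hp y hy; simp only [hFa, dif_pos hp]; exact hfau p hp y hy
  have hFbu : ∀ p ∈ star, ∀ y, y ∈ tri ∧ y.1 = p.1 ∧ y.2.2 = p.2.2 → y = Fb p := by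
    intro p hp y hy; simp only [hFb, dif_pos hp]; exact hfbu p hp y hy
  have hFcu : ∀ p ∈ star, ∀ y, y ∈ tri ∧ y.2.1 = p.2.1 ∧ y.2.2 = p.2.2 → y = Fc p := by
    intro p hp y hy; simp only [hFc, dif_pos hp]; exact hfcu p hp y hy
  have hGau : ∀ q ∈ tri, ∀ y, y ∈ star ∧ y.1 = q.1 ∧ y.2.1 = q.2.1 → y = Ga q := by
    intro q hq y hy; simp only [hGa, dif_pos hq]; exact hgau q hq y hy
  have hGbu : ∀ q ∈ tri, ∀ y, y ∈ star ∧ y.1 = q.1 ∧ y.2.2 = q.2.2 → y = Gb q := by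
    intro q hq y hy; simp only [hGb, dif_pos hq]; exact hgbu q hq y hy
  have hGcu : ∀ q ∈ tri, ∀ y, y ∈ star ∧ y.2.1 = q.2.1 ∧ y.2.2 = q.2.2 → y = Gc q := by
    intro q hq y hy; simp only [hGc, dif_pos hq]; exact hgcu q hq y hy
  -- inverse relations
  have hFaGa : ∀ q ∈ tri, Fa (Ga q) = q := by
    intro q hq
    obtain ⟨h1, h2, h3⟩ := hGa1 q hq
    exact (hFau (Ga q) h1 q ⟨hq, h2.symm, h3.symm⟩).symm
  have hFbGb : ∀ q ∈ tri, Fb (Gb q) = q := by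
    intro q hq
    obtain ⟨h1, h2, h3⟩ := hGb1 q hq
    exact (hFbu (Gb q) h1 q ⟨hq, h2.symm, h3.symm⟩).symm
  have hFcGc : ∀ q ∈ tri, Fc (Gc q) = q := by
    intro q hq
    obtain ⟨h1, h2, h3⟩ := hGc1 q hq
    exact (hFcu (Gc q) h1 q ⟨hq, h2.symm, h3.symm⟩).symm
  have hGaFa : ∀ p ∈ star, Ga (Fa p) = p := by
    intro p hp
    obtain ⟨h1, h2, h3⟩ := hFa1 p hp
    exact (hGau (Fa p) h1 p ⟨hp, h2.symm, h3.symm⟩).symm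
  have hGbFb : ∀ p ∈ star, Gb (Fb p) = p := by
    intro p hp
    obtain ⟨h1, h2, h3⟩ := hFb1 p hp
    exact (hGbu (Fb p) h1 p ⟨hp, h2.symm, h3.symm⟩).symm
  have hGcFc : ∀ p ∈ star, Gc (Fc p) = p := by
    intro p hp
    obtain ⟨h1, h2, h3⟩ := hFc1 p hp
    exact (hGcu (Fc p) h1 p ⟨hp, h2.symm, h3.symm⟩).symm
  -- the maximum of σ3 on the occurring symbols
  have hne : (star.image fun p => σ3 p.2.2).Nonempty :=
    ⟨σ3 a.2.2, Finset.mem_image_of_mem _ ha⟩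
  set M := (star.image fun p => σ3 p.2.2).max' hne with hM
  have hle : ∀ p ∈ star, σ3 p.2.2 ≤ M := by
    intro p hp
    exact Finset.le_max' (star.image fun p => σ3 p.2.2) (σ3 p.2.2)
      (Finset.mem_image_of_mem _ hp)
  set A := star.filter (fun p => σ3 p.2.2 = M) with hA
  set B := tri.filter (fun q => σ3 q.2.2 = M) with hBdef
  have hAs : ∀ p ∈ A, p ∈ star := fun p hp => (Finset.mem_filter.mp hp).1
  have hAM : ∀ p ∈ A, σ3 p.2.2 = M := fun p hp => (Finset.mem_filter.mp hp).2
  have hBs : ∀ q ∈ B, q ∈ tri := fun q hq => (Finset.mem_filter.mp hq).1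
  have hBM : ∀ q ∈ B, σ3 q.2.2 = M := fun q hq => (Finset.mem_filter.mp hq).2
  -- homotopy relations transported by Ga, Gb
  have hGaval : ∀ q ∈ tri, σ1 q.1 + σ2 q.2.1 = σ3 (Ga q).2.2 := by
    intro q hq
    obtain ⟨h1, h2, h3⟩ := hGa1 q hq
    have h := hσ _ h1
    rw [h2, h3] at h
    exact h
  have hGbval : ∀ q ∈ tri, σ1 q.1 + σ2 (Gb q).2.1 = σ3 q.2.2 := by
    intro q hq
    obtain ⟨h1, h2, h3⟩ := hGb1 q hq
    have h := hσ _ h1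
    rw [h2, h3] at h
    exact h
  -- the two sum identities
  have sum1 : ∑ q ∈ B, σ2 q.2.1 = ∑ p ∈ A, σ2 p.2.1 := by
    refine Finset.sum_bij' (fun q _ => Gc q) (fun p _ => Fc p) ?_ ?_ ?_ ?_ ?_
    · intro q hq
      obtain ⟨h1, _, h3⟩ := hGc1 q (hBs q hq)
      exact Finset.mem_filter.mpr ⟨h1, by rw [h3]; exact hBM q hq⟩
    · intro p hp
      obtain ⟨h1, _, h3⟩ := hFc1 p (hAs p hp)
      exact Finset.mem_filter.mpr ⟨h1, by rw [h3]; exact hAM p hp⟩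
    · intro q hq; exact hFcGc q (hBs q hq)
    · intro p hp; exact hGcFc p (hAs p hp)
    · intro q hq
      obtain ⟨_, h2, _⟩ := hGc1 q (hBs q hq)
      rw [h2]
  have sum2 : ∑ q ∈ B, σ2 (Gb q).2.1 = ∑ p ∈ A, σ2 p.2.1 := by
    refine Finset.sum_bij' (fun q _ => Gb q) (fun p _ => Fb p) ?_ ?_ ?_ ?_ ?_
    · intro q hq
      obtain ⟨h1, _, h3⟩ := hGb1 q (hBs q hq)
      exact Finset.mem_filter.mpr ⟨h1, by rw [h3]; exact hBM q hq⟩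
    · intro p hp
      obtain ⟨h1, _, h3⟩ := hFb1 p (hAs p hp)
      exact Finset.mem_filter.mpr ⟨h1, by rw [h3]; exact hAM p hp⟩
    · intro q hq; exact hFbGb q (hBs q hq)
    · intro p hp; exact hGbFb p (hAs p hp)
    · intro q hq; rfl
  have dsum : ∑ q ∈ B, (σ3 (Ga q).2.2 - M) = 0 := by
    have hcongr : ∀ q ∈ B, σ3 (Ga q).2.2 - M = σ2 q.2.1 - σ2 (Gb q).2.1 := by
      intro q hq
      have h1 := hGaval q (hBs q hq)
      have h2 := hGbval q (hBs q hq)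
      have h3 := hBM q hq
      omega
    rw [Finset.sum_congr rfl hcongr, Finset.sum_sub_distrib, sum1, sum2, sub_self]
  have dnonpos : ∀ q ∈ B, σ3 (Ga q).2.2 - M ≤ 0 := by
    intro q hq
    have := hle (Ga q) (hGa1 q (hBs q hq)).1
    omega
  have dzero : ∀ q ∈ B, σ3 (Ga q).2.2 = M := by
    intro q hq
    have := (Finset.sum_eq_zero_iff_of_nonpos dnonpos).mp dsum q hq
    omega
  -- card A = card B, and surjectivity of Ga : B → A
  have cardAB : A.card = B.card := by
    refine Finset.card_bij' (fun p _ => Fb p) (fun q _ => Gb q) ?_ ?_ ?_ ?_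
    · intro p hp
      obtain ⟨h1, _, h3⟩ := hFb1 p (hAs p hp)
      exact Finset.mem_filter.mpr ⟨h1, by rw [h3]; exact hAM p hp⟩
    · intro q hq
      obtain ⟨h1, _, h3⟩ := hGb1 q (hBs q hq)
      exact Finset.mem_filter.mpr ⟨h1, by rw [h3]; exact hBM q hq⟩
    · intro p hp; exact hGbFb p (hAs p hp)
    · intro q hq; exact hFbGb q (hBs q hq)
  have hsurj : ∀ p ∈ A, ∃ q, ∃ _ : q ∈ B, p = Ga q := by
    refine Finset.surj_on_of_inj_on_of_card_le (fun q _ => Ga q) ?_ ?_ (le_of_eq cardAB)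
    · intro q hq
      exact Finset.mem_filter.mpr ⟨(hGa1 q (hBs q hq)).1, dzero q hq⟩
    · intro q1 q2 hq1 hq2 heq
      have := congrArg Fa heq
      rwa [hFaGa q1 (hBs q1 hq1), hFaGa q2 (hBs q2 hq2)] at this
  have hFaA : ∀ p ∈ A, σ3 (Fa p).2.2 = M := by
    intro p hp
    obtain ⟨q, hq, rfl⟩ := hsurj p hp
    rw [hFaGa q (hBs q hq)]
    exact hBM q hq
  -- σ3 is constant (= M) on all of star
  have hallM : ∀ p ∈ star, σ3 p.2.2 = M := by
    have hp0 : ∃ p0 ∈ star, σ3 p0.2.2 = M := by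
      have := (star.image fun p => σ3 p.2.2).max'_mem hne
      rw [← hM] at this
      obtain ⟨p0, hp0, hval⟩ := Finset.mem_image.mp this
      exact ⟨p0, hp0, hval⟩
    obtain ⟨p0, hp0s, hp0M⟩ := hp0
    refine bitrade_indec_const hB hind (fun t => σ3 t.2.2 = M) ?_ hp0s hp0M
    intro p hp q hq hshare
    show σ3 p.2.2 = M ↔ σ3 q.2.2 = M
    rcases hshare with ⟨e1, e2⟩ | ⟨_, e3⟩ | ⟨_, e3⟩
    · constructor
      · intro hPp
        have hq' : q = Fa p := hFau p hp q ⟨hq, e1.symm, e2.symm⟩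
        rw [hq']
        exact hFaA p (Finset.mem_filter.mpr ⟨hp, hPp⟩)
      · intro hPq
        have hp' : p = Ga q := hGau q hq p ⟨hp, e1, e2⟩
        rw [hp']
        exact dzero q (Finset.mem_filter.mpr ⟨hq, hPq⟩)
    · rw [e3]
    · rw [e3]
  -- hence the homotopy relation holds on tri as well
  have htri : ∀ q ∈ tri, σ1 q.1 + σ2 q.2.1 = σ3 q.2.2 := by
    intro q hq
    have h1 := hGaval q hq
    have h2 := hallM (Ga q) (hGa1 q hq).1
    have h3 := hallM (Gb q) (hGb1 q hq).1
    have h4 := (hGb1 q hq).2.2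
    rw [h4] at h3
    omega
  -- conclude constancy of σ1 and σ2 via the indecomposability lemma
  have key1 : ∀ p ∈ star, ∀ q ∈ tri, BitradeShare p q → (σ1 p.1 = σ1 q.1) := by
    intro p hp q hq hshare
    rcases hshare with ⟨e1, _⟩ | ⟨e1, _⟩ | ⟨e2, e3⟩
    · rw [e1]
    · rw [e1]
    · have h1 := hσ p hp
      have h2 := htri q hq
      rw [e2, e3] at h1
      omega
  have key2 : ∀ p ∈ star, ∀ q ∈ tri, BitradeShare p q → (σ2 p.2.1 = σ2 q.2.1) := by
    intro p hp q hq hshare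
    rcases hshare with ⟨e1, e2⟩ | ⟨e1, e3⟩ | ⟨e2, _⟩
    · rw [e2]
    · have h1 := hσ p hp
      have h2 := htri q hq
      rw [e1, e3] at h1
      omega
    · rw [e2]
  refine ⟨?_, ?_, ?_⟩
  · have := bitrade_indec_const hB hind (fun t => σ1 t.1 = σ1 a.1) ?_ ha rfl b hb
    · exact this.symm
    · intro p hp q hq hshare
      show σ1 p.1 = σ1 a.1 ↔ σ1 q.1 = σ1 a.1
      rw [key1 p hp q hq hshare]
  · have := bitrade_indec_const hB hind (fun t => σ2 t.2.1 = σ2 a.2.1) ?_ ha rfl b hb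
    · exact this.symm
    · intro p hp q hq hshare
      show σ2 p.2.1 = σ2 a.2.1 ↔ σ2 q.2.1 = σ2 a.2.1
      rw [key2 p hp q hq hshare]
  · rw [hallM a ha, hallM b hb]
end

section
/- Let T = (T*, T△) be a spherical latin bitrade and a ∈ T*. Then the system of linear equations Eq(T,a) has a unique solution in rational numbers. Moreover, with B the equation matrix of T, det B_{1m} ≠ 0. -/
open Function Set

variable {R C S : Type*} [DecidableEq R] [DecidableEq C] [DecidableEq S]

theorem my_exun_congr {α : Type*} {p q : α → Prop} (h : ∃! x, p x) (hiff : ∀ x, p x ↔ q x) :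
    ∃! x, q x := by
  obtain ⟨x, hx, hu⟩ := h
  exact ⟨x, (hiff x).1 hx, fun y hy => hu y ((hiff y).2 hy)⟩

theorem my_sum_rel {α : Type*} {A B : Finset α} {rel : α → α → Prop}
    (hAB : ∀ a ∈ A, ∃! b, b ∈ B ∧ rel a b)
    (hBA : ∀ b ∈ B, ∃! a, a ∈ A ∧ rel a b)
    (w : α → ℚ) (hw : ∀ a b, rel a b → w a = w b) :
    ∑ x ∈ A, w x = ∑ x ∈ B, w x := by
  refine Finset.sum_bij (fun a ha => (hAB a ha).choose) ?_ ?_ ?_ ?_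
  · intro a ha; exact ((hAB a ha).choose_spec.1).1
  · intro a₁ ha₁ a₂ ha₂ h
    have h' : (hAB a₁ ha₁).choose = (hAB a₂ ha₂).choose := h
    have s₁ := (hAB a₁ ha₁).choose_spec.1
    have s₂ := (hAB a₂ ha₂).choose_spec.1
    rw [h'] at s₁
    obtain ⟨b, hb, hub⟩ := hBA _ s₂.1
    rw [hub a₁ ⟨ha₁, s₁.2⟩, hub a₂ ⟨ha₂, s₂.2⟩]
  · intro b hb
    obtain ⟨a, ha, hua⟩ := hBA b hb
    exact ⟨a, ha.1, ((hAB a ha.1).choose_spec.2 b ⟨hb, ha.2⟩).symm⟩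
  · intro a ha; exact hw _ _ (hAB a ha).choose_spec.1.2

theorem my_card_rel {α : Type*} {A B : Finset α} {rel : α → α → Prop}
    (hAB : ∀ a ∈ A, ∃! b, b ∈ B ∧ rel a b)
    (hBA : ∀ b ∈ B, ∃! a, a ∈ A ∧ rel a b) :
    A.card = B.card := by
  refine Finset.card_bij (fun a ha => (hAB a ha).choose) ?_ ?_ ?_
  · intro a ha; exact ((hAB a ha).choose_spec.1).1
  · intro a₁ ha₁ a₂ ha₂ h
    have h' : (hAB a₁ ha₁).choose = (hAB a₂ ha₂).choose := h
    have s₁ := (hAB a₁ ha₁).choose_spec.1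
    have s₂ := (hAB a₂ ha₂).choose_spec.1
    rw [h'] at s₁
    obtain ⟨b, hb, hub⟩ := hBA _ s₂.1
    rw [hub a₁ ⟨ha₁, s₁.2⟩, hub a₂ ⟨ha₂, s₂.2⟩]
  · intro b hb
    obtain ⟨a, ha, hua⟩ := hBA b hb
    exact ⟨a, ha.1, ((hAB a ha.1).choose_spec.2 b ⟨hb, ha.2⟩).symm⟩

/-- the cyclic shift of coordinates -/
def bcyc : R × C × S → S × R × C := fun p => (p.2.2, p.1, p.2.1)

theorem bcyc_inj : Function.Injective (bcyc (R := R) (C := C) (S := S)) := by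
  rintro ⟨a, b, c⟩ ⟨d, e, f⟩ h
  simp only [bcyc, Prod.ext_iff] at h ⊢
  tauto

theorem bcyc_bcyc_bcyc (p : R × C × S) : bcyc (bcyc (bcyc p)) = p := rfl

theorem bitrade_bcyc {star tri : Finset (R × C × S)} (h : IsLatinBitrade star tri) :
    IsLatinBitrade (star.image bcyc) (tri.image bcyc) := by
  constructor
  · exact Finset.disjoint_image bcyc_inj |>.mpr h.disj
  · rintro p' hp'
    obtain ⟨p, hp, rfl⟩ := Finset.mem_image.1 hp'
    obtain ⟨q, ⟨hq, h1, h2⟩, hu⟩ := h.r2b p hp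
    refine ⟨bcyc q, ⟨Finset.mem_image_of_mem _ hq, h2, h1⟩, ?_⟩
    rintro q' ⟨hq', e1, e2⟩
    obtain ⟨q₀, hq₀, rfl⟩ := Finset.mem_image.1 hq'
    rw [hu q₀ ⟨hq₀, e2, e1⟩]
  · rintro p' hp'
    obtain ⟨p, hp, rfl⟩ := Finset.mem_image.1 hp'
    obtain ⟨q, ⟨hq, h1, h2⟩, hu⟩ := h.r2c p hp
    refine ⟨bcyc q, ⟨Finset.mem_image_of_mem _ hq, h2, h1⟩, ?_⟩
    rintro q' ⟨hq', e1, e2⟩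
    obtain ⟨q₀, hq₀, rfl⟩ := Finset.mem_image.1 hq'
    rw [hu q₀ ⟨hq₀, e2, e1⟩]
  · rintro p' hp'
    obtain ⟨p, hp, rfl⟩ := Finset.mem_image.1 hp'
    obtain ⟨q, ⟨hq, h1, h2⟩, hu⟩ := h.r2a p hp
    refine ⟨bcyc q, ⟨Finset.mem_image_of_mem _ hq, h1, h2⟩, ?_⟩
    rintro q' ⟨hq', e1, e2⟩
    obtain ⟨q₀, hq₀, rfl⟩ := Finset.mem_image.1 hq'
    rw [hu q₀ ⟨hq₀, e1, e2⟩]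
  · rintro q' hq'
    obtain ⟨q, hq, rfl⟩ := Finset.mem_image.1 hq'
    obtain ⟨p, ⟨hp, h1, h2⟩, hu⟩ := h.r3b q hq
    refine ⟨bcyc p, ⟨Finset.mem_image_of_mem _ hp, h2, h1⟩, ?_⟩
    rintro p' ⟨hp', e1, e2⟩
    obtain ⟨p₀, hp₀, rfl⟩ := Finset.mem_image.1 hp'
    rw [hu p₀ ⟨hp₀, e2, e1⟩]
  · rintro q' hq'
    obtain ⟨q, hq, rfl⟩ := Finset.mem_image.1 hq'
    obtain ⟨p, ⟨hp, h1, h2⟩, hu⟩ := h.r3c q hq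
    refine ⟨bcyc p, ⟨Finset.mem_image_of_mem _ hp, h2, h1⟩, ?_⟩
    rintro p' ⟨hp', e1, e2⟩
    obtain ⟨p₀, hp₀, rfl⟩ := Finset.mem_image.1 hp'
    rw [hu p₀ ⟨hp₀, e2, e1⟩]
  · rintro q' hq'
    obtain ⟨q, hq, rfl⟩ := Finset.mem_image.1 hq'
    obtain ⟨p, ⟨hp, h1, h2⟩, hu⟩ := h.r3a q hq
    refine ⟨bcyc p, ⟨Finset.mem_image_of_mem _ hp, h1, h2⟩, ?_⟩
    rintro p' ⟨hp', e1, e2⟩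
    obtain ⟨p₀, hp₀, rfl⟩ := Finset.mem_image.1 hp'
    rw [hu p₀ ⟨hp₀, e1, e2⟩]

theorem image_bcyc3 (star : Finset (R × C × S)) :
    ((star.image bcyc).image bcyc).image bcyc = star := by
  rw [Finset.image_image, Finset.image_image]
  have : ((bcyc ∘ bcyc) ∘ bcyc : R × C × S → R × C × S) = id := funext bcyc_bcyc_bcyc
  rw [this, Finset.image_id]

theorem indec_bcyc {star tri : Finset (R × C × S)} (h : BitradeIndecomposable star tri) :
    BitradeIndecomposable (star.image bcyc) (tri.image bcyc) := by
  rintro ⟨s₁, t₁, s₂, t₂, hs1, hs2, hds, hdt, hsu, htu, hb1, hb2⟩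
  refine h ⟨(s₁.image bcyc).image bcyc, (t₁.image bcyc).image bcyc,
    (s₂.image bcyc).image bcyc, (t₂.image bcyc).image bcyc,
    hs1.image _ |>.image _, hs2.image _ |>.image _, ?_, ?_, ?_, ?_,
    bitrade_bcyc (bitrade_bcyc hb1), bitrade_bcyc (bitrade_bcyc hb2)⟩
  · exact (Finset.disjoint_image bcyc_inj).mpr ((Finset.disjoint_image bcyc_inj).mpr hds)
  · exact (Finset.disjoint_image bcyc_inj).mpr ((Finset.disjoint_image bcyc_inj).mpr hdt)
  · rw [← Finset.image_union, ← Finset.image_union, hsu, image_bcyc3]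
  · rw [← Finset.image_union, ← Finset.image_union, htu, image_bcyc3]

theorem constant3 {star tri : Finset (R × C × S)} (hlb : IsLatinBitrade star tri)
    (hind : BitradeIndecomposable star tri)
    (g1 : R → ℚ) (g2 : C → ℚ) (g3 : S → ℚ)
    (heq : ∀ p ∈ star, g1 p.1 + g2 p.2.1 = g3 p.2.2) :
    ∀ p ∈ star, ∀ p' ∈ star, g3 p.2.2 = g3 p'.2.2 := by
  rcases star.eq_empty_or_nonempty with rfl | hne
  · intro p hp; exact absurd hp (by simp)
  obtain ⟨pm, hpm, hmax⟩ := star.exists_max_image (fun p => g3 p.2.2) hne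
  set μ := g3 pm.2.2 with hμdef
  have hle : ∀ p ∈ star, g3 p.2.2 ≤ μ := hmax
  set Sμ := star.filter (fun p => g3 p.2.2 = μ) with hSdef
  set Tμ := tri.filter (fun q => g3 q.2.2 = μ) with hTdef
  have hSsub : Sμ ⊆ star := Finset.filter_subset _ _
  have hTsub : Tμ ⊆ tri := Finset.filter_subset _ _
  have hpmu : ∀ p, p ∈ Sμ → g3 p.2.2 = μ := fun p hp => (Finset.mem_filter.1 hp).2
  have hqmu : ∀ q, q ∈ Tμ → g3 q.2.2 = μ := fun q hq => (Finset.mem_filter.1 hq).2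
  have hSne : Sμ.Nonempty := ⟨pm, Finset.mem_filter.2 ⟨hpm, rfl⟩⟩
  -- the (row,symbol)-bijection between Sμ and Tμ
  have hAB13 : ∀ p ∈ Sμ, ∃! q, q ∈ Tμ ∧ p.1 = q.1 ∧ p.2.2 = q.2.2 := by
    intro p hp
    refine my_exun_congr (hlb.r2b p (hSsub hp)) fun q => ⟨?_, ?_⟩
    · rintro ⟨hq, e1, e2⟩
      exact ⟨Finset.mem_filter.2 ⟨hq, by rw [e2, hpmu p hp]⟩, e1.symm, e2.symm⟩
    · rintro ⟨hq, e1, e2⟩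
      exact ⟨hTsub hq, e1.symm, e2.symm⟩
  have hBA13 : ∀ q ∈ Tμ, ∃! p, p ∈ Sμ ∧ p.1 = q.1 ∧ p.2.2 = q.2.2 := by
    intro q hq
    refine my_exun_congr (hlb.r3b q (hTsub hq)) fun p => ⟨?_, ?_⟩
    · rintro ⟨hp, e1, e2⟩
      exact ⟨Finset.mem_filter.2 ⟨hp, by rw [e2, hqmu q hq]⟩, e1, e2⟩
    · rintro ⟨hp, e1, e2⟩
      exact ⟨hSsub hp, e1, e2⟩
  -- the (column,symbol)-bijection between Sμ and Tμ
  have hAB23 : ∀ p ∈ Sμ, ∃! q, q ∈ Tμ ∧ p.2.1 = q.2.1 ∧ p.2.2 = q.2.2 := by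
    intro p hp
    refine my_exun_congr (hlb.r2c p (hSsub hp)) fun q => ⟨?_, ?_⟩
    · rintro ⟨hq, e1, e2⟩
      exact ⟨Finset.mem_filter.2 ⟨hq, by rw [e2, hpmu p hp]⟩, e1.symm, e2.symm⟩
    · rintro ⟨hq, e1, e2⟩
      exact ⟨hTsub hq, e1.symm, e2.symm⟩
  have hBA23 : ∀ q ∈ Tμ, ∃! p, p ∈ Sμ ∧ p.2.1 = q.2.1 ∧ p.2.2 = q.2.2 := by
    intro q hq
    refine my_exun_congr (hlb.r3c q (hTsub hq)) fun p => ⟨?_, ?_⟩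
    · rintro ⟨hp, e1, e2⟩
      exact ⟨Finset.mem_filter.2 ⟨hp, by rw [e2, hqmu q hq]⟩, e1, e2⟩
    · rintro ⟨hp, e1, e2⟩
      exact ⟨hSsub hp, e1, e2⟩
  have hsum1 : ∑ p ∈ Sμ, g1 p.1 = ∑ q ∈ Tμ, g1 q.1 :=
    my_sum_rel hAB13 hBA13 (fun p => g1 p.1) (fun a b h => congrArg g1 h.1)
  have hsum2 : ∑ p ∈ Sμ, g2 p.2.1 = ∑ q ∈ Tμ, g2 q.2.1 :=
    my_sum_rel hAB23 hBA23 (fun p => g2 p.2.1) (fun a b h => congrArg g2 h.1)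
  have hsumc : ∑ _p ∈ Sμ, μ = ∑ _q ∈ Tμ, μ :=
    my_sum_rel hAB13 hBA13 (fun _ => μ) (fun _ _ _ => rfl)
  have hsum3 : ∑ q ∈ Tμ, (g1 q.1 + g2 q.2.1) = ∑ _q ∈ Tμ, μ := by
    rw [Finset.sum_add_distrib, ← hsum1, ← hsum2, ← hsumc, ← Finset.sum_add_distrib]
    refine Finset.sum_congr rfl fun p hp => ?_
    rw [heq p (hSsub hp), hpmu p hp]
  have hvle : ∀ q ∈ tri, g1 q.1 + g2 q.2.1 ≤ μ := by
    intro q hq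
    obtain ⟨p, ⟨hp, e1, e2⟩, _⟩ := hlb.r3a q hq
    rw [← e1, ← e2, heq p hp]
    exact hle p hp
  have hveq : ∀ q ∈ Tμ, g1 q.1 + g2 q.2.1 = μ := by
    by_contra hcon
    push_neg at hcon
    obtain ⟨q₀, hq₀, hne₀⟩ := hcon
    have hlt : ∑ q ∈ Tμ, (g1 q.1 + g2 q.2.1) < ∑ _q ∈ Tμ, μ :=
      Finset.sum_lt_sum (fun q hq => hvle q (hTsub hq))
        ⟨q₀, hq₀, lt_of_le_of_ne (hvle q₀ (hTsub hq₀)) hne₀⟩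
    exact absurd hsum3 (ne_of_lt hlt)
  -- transfers
  have T13 : ∀ p q, p ∈ star → q ∈ tri → p.2.2 = q.2.2 → (p ∈ Sμ ↔ q ∈ Tμ) := by
    intro p q hp hq e
    constructor
    · intro h; exact Finset.mem_filter.2 ⟨hq, by rw [← e]; exact hpmu p h⟩
    · intro h; exact Finset.mem_filter.2 ⟨hp, by rw [e]; exact hqmu q h⟩
  have T12b : ∀ p q, p ∈ star → q ∈ Tμ → p.1 = q.1 → p.2.1 = q.2.1 → p ∈ Sμ := by
    intro p q hp hq e1 e2
    refine Finset.mem_filter.2 ⟨hp, ?_⟩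
    rw [← heq p hp, e1, e2]
    exact hveq q hq
  have hcard : Sμ.card = Tμ.card := my_card_rel hAB13 hBA13
  have hsurjST : ∀ p ∈ Sμ, ∃ q, ∃ hq : q ∈ Tμ, p = (hlb.r3a q (hTsub hq)).choose := by
    refine Finset.surj_on_of_inj_on_of_card_le
      (fun q hq => (hlb.r3a q (hTsub hq)).choose) ?_ ?_ hcard.le
    · intro q hq
      have hs := (hlb.r3a q (hTsub hq)).choose_spec.1
      exact T12b _ q hs.1 hq hs.2.1 hs.2.2
    · intro q₁ q₂ hq₁ hq₂ hEq
      have hEq' : (hlb.r3a q₁ (hTsub hq₁)).choose = (hlb.r3a q₂ (hTsub hq₂)).choose := hEq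
      have s₁ := (hlb.r3a q₁ (hTsub hq₁)).choose_spec.1
      have s₂ := (hlb.r3a q₂ (hTsub hq₂)).choose_spec.1
      obtain ⟨q, hqq, hu⟩ := hlb.r2a _ s₁.1
      have e₁ : q₁ = q := hu q₁ ⟨hTsub hq₁, s₁.2.1.symm, s₁.2.2.symm⟩
      have c1 : q₂.1 = (hlb.r3a q₁ (hTsub hq₁)).choose.1 := by rw [hEq']; exact s₂.2.1.symm
      have c2 : q₂.2.1 = (hlb.r3a q₁ (hTsub hq₁)).choose.2.1 := by rw [hEq']; exact s₂.2.2.symm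
      have e₂ : q₂ = q := hu q₂ ⟨hTsub hq₂, c1, c2⟩
      rw [e₁, e₂]
  have T12f : ∀ p q, p ∈ Sμ → q ∈ tri → p.1 = q.1 → p.2.1 = q.2.1 → q ∈ Tμ := by
    intro p q hp hq e1 e2
    obtain ⟨q', hq', hpq⟩ := hsurjST p hp
    have s' := (hlb.r3a q' (hTsub hq')).choose_spec.1
    obtain ⟨qq, hqq, hu⟩ := hlb.r2a p (hSsub hp)
    have eq1 : q = qq := hu q ⟨hq, e1.symm, e2.symm⟩
    have c1 : q'.1 = p.1 := by rw [hpq]; exact s'.2.1.symm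
    have c2 : q'.2.1 = p.2.1 := by rw [hpq]; exact s'.2.2.symm
    have eq2 : q' = qq := hu q' ⟨hTsub hq', c1, c2⟩
    rw [eq1, ← eq2]
    exact hq'
  -- if Sμ ≠ star we get a decomposition
  have hSfull : Sμ = star := by
    by_contra hne2
    have hssub : Sμ ⊂ star := ⟨hSsub, fun h => hne2 (Finset.Subset.antisymm hSsub h)⟩
    obtain ⟨p₀, hp₀, hp₀n⟩ := Finset.exists_of_ssubset hssub
    refine hind ⟨Sμ, Tμ, star \ Sμ, tri \ Tμ, hSne, ⟨p₀, Finset.mem_sdiff.2 ⟨hp₀, hp₀n⟩⟩,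
      Finset.disjoint_sdiff, Finset.disjoint_sdiff, Finset.union_sdiff_of_subset hSsub,
      Finset.union_sdiff_of_subset hTsub, ?_, ?_⟩
    · constructor
      · exact Finset.disjoint_of_subset_left hSsub
          (Finset.disjoint_of_subset_right hTsub hlb.disj)
      · intro p hp
        refine my_exun_congr (hlb.r2a p (hSsub hp)) fun q => ⟨?_, ?_⟩
        · rintro ⟨hq, e1, e2⟩; exact ⟨T12f p q hp hq e1.symm e2.symm, e1, e2⟩
        · rintro ⟨hq, e1, e2⟩; exact ⟨hTsub hq, e1, e2⟩
      · intro p hp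
        refine my_exun_congr (hlb.r2b p (hSsub hp)) fun q => ⟨?_, ?_⟩
        · rintro ⟨hq, e1, e2⟩; exact ⟨(T13 p q (hSsub hp) hq e2.symm).1 hp, e1, e2⟩
        · rintro ⟨hq, e1, e2⟩; exact ⟨hTsub hq, e1, e2⟩
      · intro p hp
        refine my_exun_congr (hlb.r2c p (hSsub hp)) fun q => ⟨?_, ?_⟩
        · rintro ⟨hq, e1, e2⟩; exact ⟨(T13 p q (hSsub hp) hq e2.symm).1 hp, e1, e2⟩
        · rintro ⟨hq, e1, e2⟩; exact ⟨hTsub hq, e1, e2⟩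
      · intro q hq
        refine my_exun_congr (hlb.r3a q (hTsub hq)) fun p => ⟨?_, ?_⟩
        · rintro ⟨hp, e1, e2⟩; exact ⟨T12b p q hp hq e1 e2, e1, e2⟩
        · rintro ⟨hp, e1, e2⟩; exact ⟨hSsub hp, e1, e2⟩
      · intro q hq
        refine my_exun_congr (hlb.r3b q (hTsub hq)) fun p => ⟨?_, ?_⟩
        · rintro ⟨hp, e1, e2⟩; exact ⟨(T13 p q hp (hTsub hq) e2).2 hq, e1, e2⟩
        · rintro ⟨hp, e1, e2⟩; exact ⟨hSsub hp, e1, e2⟩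
      · intro q hq
        refine my_exun_congr (hlb.r3c q (hTsub hq)) fun p => ⟨?_, ?_⟩
        · rintro ⟨hp, e1, e2⟩; exact ⟨(T13 p q hp (hTsub hq) e2).2 hq, e1, e2⟩
        · rintro ⟨hp, e1, e2⟩; exact ⟨hSsub hp, e1, e2⟩
    · constructor
      · exact Finset.disjoint_of_subset_left (Finset.sdiff_subset)
          (Finset.disjoint_of_subset_right (Finset.sdiff_subset) hlb.disj)
      · intro p hp
        obtain ⟨hps, hpn⟩ := Finset.mem_sdiff.1 hp
        refine my_exun_congr (hlb.r2a p hps) fun q => ⟨?_, ?_⟩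
        · rintro ⟨hq, e1, e2⟩
          exact ⟨Finset.mem_sdiff.2 ⟨hq, fun hqT => hpn (T12b p q hps hqT e1.symm e2.symm)⟩, e1, e2⟩
        · rintro ⟨hq, e1, e2⟩; exact ⟨(Finset.mem_sdiff.1 hq).1, e1, e2⟩
      · intro p hp
        obtain ⟨hps, hpn⟩ := Finset.mem_sdiff.1 hp
        refine my_exun_congr (hlb.r2b p hps) fun q => ⟨?_, ?_⟩
        · rintro ⟨hq, e1, e2⟩
          exact ⟨Finset.mem_sdiff.2 ⟨hq, fun hqT => hpn ((T13 p q hps hq e2.symm).2 hqT)⟩, e1, e2⟩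
        · rintro ⟨hq, e1, e2⟩; exact ⟨(Finset.mem_sdiff.1 hq).1, e1, e2⟩
      · intro p hp
        obtain ⟨hps, hpn⟩ := Finset.mem_sdiff.1 hp
        refine my_exun_congr (hlb.r2c p hps) fun q => ⟨?_, ?_⟩
        · rintro ⟨hq, e1, e2⟩
          exact ⟨Finset.mem_sdiff.2 ⟨hq, fun hqT => hpn ((T13 p q hps hq e2.symm).2 hqT)⟩, e1, e2⟩
        · rintro ⟨hq, e1, e2⟩; exact ⟨(Finset.mem_sdiff.1 hq).1, e1, e2⟩
      · intro q hq
        obtain ⟨hqt, hqn⟩ := Finset.mem_sdiff.1 hq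
        refine my_exun_congr (hlb.r3a q hqt) fun p => ⟨?_, ?_⟩
        · rintro ⟨hp, e1, e2⟩
          exact ⟨Finset.mem_sdiff.2 ⟨hp, fun hpS => hqn (T12f p q hpS hqt e1 e2)⟩, e1, e2⟩
        · rintro ⟨hp, e1, e2⟩; exact ⟨(Finset.mem_sdiff.1 hp).1, e1, e2⟩
      · intro q hq
        obtain ⟨hqt, hqn⟩ := Finset.mem_sdiff.1 hq
        refine my_exun_congr (hlb.r3b q hqt) fun p => ⟨?_, ?_⟩
        · rintro ⟨hp, e1, e2⟩
          exact ⟨Finset.mem_sdiff.2 ⟨hp, fun hpS => hqn ((T13 p q hp hqt e2).1 hpS)⟩, e1, e2⟩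
        · rintro ⟨hp, e1, e2⟩; exact ⟨(Finset.mem_sdiff.1 hp).1, e1, e2⟩
      · intro q hq
        obtain ⟨hqt, hqn⟩ := Finset.mem_sdiff.1 hq
        refine my_exun_congr (hlb.r3c q hqt) fun p => ⟨?_, ?_⟩
        · rintro ⟨hp, e1, e2⟩
          exact ⟨Finset.mem_sdiff.2 ⟨hp, fun hpS => hqn ((T13 p q hp hqt e2).1 hpS)⟩, e1, e2⟩
        · rintro ⟨hp, e1, e2⟩; exact ⟨(Finset.mem_sdiff.1 hp).1, e1, e2⟩
  have hall : ∀ p ∈ star, g3 p.2.2 = μ := by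
    intro p hp
    have : p ∈ Sμ := by rw [hSfull]; exact hp
    exact hpmu p this
  intro p hp p' hp'
  rw [hall p hp, hall p' hp']

theorem const_all {star tri : Finset (R × C × S)} (hlb : IsLatinBitrade star tri)
    (hind : BitradeIndecomposable star tri)
    (g1 : R → ℚ) (g2 : C → ℚ) (g3 : S → ℚ)
    (heq : ∀ p ∈ star, g1 p.1 + g2 p.2.1 = g3 p.2.2) :
    (∀ p ∈ star, ∀ p' ∈ star, g1 p.1 = g1 p'.1) ∧
    (∀ p ∈ star, ∀ p' ∈ star, g2 p.2.1 = g2 p'.2.1) ∧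
    (∀ p ∈ star, ∀ p' ∈ star, g3 p.2.2 = g3 p'.2.2) := by
  refine ⟨?_, ?_, constant3 hlb hind g1 g2 g3 heq⟩
  · have h2 := constant3 (bitrade_bcyc (bitrade_bcyc hlb)) (indec_bcyc (indec_bcyc hind))
      (fun c => -g2 c) g3 g1 ?_
    · intro p hp p' hp'
      exact h2 (bcyc (bcyc p))
        (Finset.mem_image_of_mem _ (Finset.mem_image_of_mem _ hp))
        (bcyc (bcyc p'))
        (Finset.mem_image_of_mem _ (Finset.mem_image_of_mem _ hp'))
    · rintro p'' hp''
      obtain ⟨q, hq, rfl⟩ := Finset.mem_image.1 hp''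
      obtain ⟨p, hp, rfl⟩ := Finset.mem_image.1 hq
      show -g2 p.2.1 + g3 p.2.2 = g1 p.1
      linarith [heq p hp]
  · have h2 := constant3 (bitrade_bcyc hlb) (indec_bcyc hind)
      g3 (fun r => -g1 r) g2 ?_
    · intro p hp p' hp'
      exact h2 (bcyc p) (Finset.mem_image_of_mem _ hp) (bcyc p')
        (Finset.mem_image_of_mem _ hp')
    · rintro p'' hp''
      obtain ⟨p, hp, rfl⟩ := Finset.mem_image.1 hp''
      show g3 p.2.2 + -g1 p.1 = g2 p.2.1
      linarith [heq p hp]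


/-- **Lemma 4.3 (Lemma 43).** For a spherical latin bitrade the system `Eq(T,a)` has a
unique rational solution, and `det B_{1m} ≠ 0` for the equation matrix `B`. -/
theorem stmt14 [Fintype R] [Fintype C] [Fintype S]
    (star tri : Finset (R × C × S)) (hsph : IsSphericalBitrade star tri)
    (a : R × C × S) (ha : a ∈ star)
    (hcovR : ∀ r : R, ∃ p ∈ star, p.1 = r)
    (hcovC : ∀ c : C, ∃ p ∈ star, p.2.1 = c)
    (hcovS : ∀ s : S, ∃ p ∈ star, p.2.2 = s)
    (s o1 o2 o3 : ℕ) (hs : star.card = s)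
    (ho1 : Fintype.card R = o1) (ho2 : Fintype.card C = o2) (ho3 : Fintype.card S = o3)
    (eqn : Fin s ≃ {p : R × C × S // p ∈ star})
    (var : (R ⊕ C ⊕ S) ≃ Fin (s + 2))
    (hvarR : ∀ r : R, ((var (Sum.inl r)) : ℕ) < o1)
    (hvarC : ∀ c : C, o1 ≤ ((var (Sum.inr (Sum.inl c))) : ℕ) ∧
      ((var (Sum.inr (Sum.inl c))) : ℕ) < o1 + o2)
    (hvarS : ∀ y : S, o1 + o2 ≤ ((var (Sum.inr (Sum.inr y))) : ℕ))
    (B : Matrix (Fin s) (Fin (s + 2)) ℤ)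
    (hB : ∀ (k : Fin s) (j : Fin (s + 2)),
      B k j = (if j = var (Sum.inl (eqn k).1.1) then 1 else 0)
            + (if j = var (Sum.inr (Sum.inl (eqn k).1.2.1)) then 1 else 0)
            - (if j = var (Sum.inr (Sum.inr (eqn k).1.2.2)) then 1 else 0)) :
    (∃! fff : (R → ℚ) × (C → ℚ) × (S → ℚ),
        IsEqSolution star a fff.1 fff.2.1 fff.2.2) ∧
    (B.submatrix id (fun k : Fin s => (Fin.last (s + 1)).succAbove
        ((0 : Fin (s + 1)).succAbove k))).det ≠ 0 := by
  obtain ⟨hlb, hind, _hcount⟩ := hsph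
  -- constancy of homogeneous solutions, extended to the whole types
  have hconstext : ∀ (g1 : R → ℚ) (g2 : C → ℚ) (g3 : S → ℚ),
      (∀ p ∈ star, g1 p.1 + g2 p.2.1 = g3 p.2.2) →
      (∀ r r', g1 r = g1 r') ∧ (∀ c c', g2 c = g2 c') ∧ (∀ y y', g3 y = g3 y') := by
    intro g1 g2 g3 hg
    obtain ⟨hc1, hc2, hc3⟩ := const_all hlb hind g1 g2 g3 hg
    refine ⟨fun r r' => ?_, fun c c' => ?_, fun y y' => ?_⟩
    · obtain ⟨p, hp, hpr⟩ := hcovR r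
      obtain ⟨p', hp', hpr'⟩ := hcovR r'
      rw [← hpr, ← hpr']; exact hc1 p hp p' hp'
    · obtain ⟨p, hp, hpr⟩ := hcovC c
      obtain ⟨p', hp', hpr'⟩ := hcovC c'
      rw [← hpr, ← hpr']; exact hc2 p hp p' hp'
    · obtain ⟨p, hp, hpr⟩ := hcovS y
      obtain ⟨p', hp', hpr'⟩ := hcovS y'
      rw [← hpr, ← hpr']; exact hc3 p hp p' hp'
  set σ : Fin s → Fin (s + 2) :=
    fun k => (Fin.last (s + 1)).succAbove ((0 : Fin (s + 1)).succAbove k) with hσdef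
  have hσval : ∀ k : Fin s, (σ k : ℕ) = (k : ℕ) + 1 := by
    intro k
    rw [hσdef]
    simp [Fin.zero_succAbove, Fin.succAbove_last]
  have hσinj : ∀ a b : Fin s, σ a = σ b → a = b := by
    intro a b h
    have := congrArg Fin.val h
    rw [hσval, hσval] at this
    exact Fin.ext (by omega)
  -- the row identity
  have hrowsum : ∀ (k : Fin s) (x : Fin (s + 2) → ℚ),
      (∑ j, ((B k j : ℤ) : ℚ) * x j) =
        x (var (Sum.inl (eqn k).1.1)) + x (var (Sum.inr (Sum.inl (eqn k).1.2.1)))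
          - x (var (Sum.inr (Sum.inr (eqn k).1.2.2))) := by
    intro k x
    have hterm : ∀ j, ((B k j : ℤ) : ℚ) * x j =
        (if j = var (Sum.inl (eqn k).1.1) then x j else 0)
        + (if j = var (Sum.inr (Sum.inl (eqn k).1.2.1)) then x j else 0)
        - (if j = var (Sum.inr (Sum.inr (eqn k).1.2.2)) then x j else 0) := by
      intro j
      rw [hB]
      push_cast
      split_ifs <;> ring
    rw [Finset.sum_congr rfl (fun j _ => hterm j), Finset.sum_sub_distrib,
      Finset.sum_add_distrib, Finset.sum_ite_eq', Finset.sum_ite_eq', Finset.sum_ite_eq']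
    simp
  -- extension of vectors from the middle columns
  have hext : ∀ v : Fin s → ℚ, ∃ x : Fin (s + 2) → ℚ,
      (∀ t, x (σ t) = v t) ∧ x 0 = 0 ∧ x (Fin.last (s + 1)) = 0 ∧
      ∀ k : Fin s, (∑ j, ((B k j : ℤ) : ℚ) * x j) = ∑ t, ((B k (σ t) : ℤ) : ℚ) * v t := by
    intro v
    refine ⟨fun j => if h : 0 < (j : ℕ) ∧ (j : ℕ) < s + 1 then v ⟨(j : ℕ) - 1, by omega⟩ else 0,
      ?_, ?_, ?_, ?_⟩
    · intro t
      have ht := hσval t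
      dsimp only
      rw [dif_pos (by omega)]
      congr 1
      exact Fin.ext (by simp [ht])
    · dsimp only
      rw [dif_neg (by simp)]
    · dsimp only
      rw [dif_neg (by simp)]
    · intro k
      dsimp only
      have himg : ∀ j : Fin (s + 2), j ∉ (Finset.univ : Finset (Fin s)).image σ →
          (if h : 0 < (j : ℕ) ∧ (j : ℕ) < s + 1 then v ⟨(j : ℕ) - 1, by omega⟩ else 0) = 0 := by
        intro j hj
        refine dif_neg fun hcond => hj ?_
        refine Finset.mem_image.2 ⟨⟨(j : ℕ) - 1, by omega⟩, Finset.mem_univ _, ?_⟩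
        refine Fin.ext ?_
        rw [hσval]
        simp only
        omega
      rw [← Finset.sum_subset (Finset.subset_univ ((Finset.univ : Finset (Fin s)).image σ))
        (fun j _ hj => by rw [himg j hj, mul_zero])]
      rw [Finset.sum_image (fun x _ y _ h => hσinj x y h)]
      refine Finset.sum_congr rfl fun t _ => ?_
      have ht := hσval t
      congr 1
      rw [dif_pos (by omega)]
      congr 1
      exact Fin.ext (by simp [ht])
  -- identification of endpoint variables
  have hvar0 : ∃ r0 : R, var.symm 0 = Sum.inl r0 := by
    rcases h : var.symm 0 with r | c | y
    · exact ⟨r, rfl⟩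
    · exfalso
      have h2 : var (Sum.inr (Sum.inl c)) = 0 := by rw [← h, Equiv.apply_symm_apply]
      have h3 := (hvarC c).1
      rw [h2] at h3
      simp at h3
      have h4 := hvarR a.1
      omega
    · exfalso
      have h2 : var (Sum.inr (Sum.inr y)) = 0 := by rw [← h, Equiv.apply_symm_apply]
      have h3 := hvarS y
      rw [h2] at h3
      simp at h3
      have h4 := hvarR a.1
      omega
  have hvarLast : ∃ y0 : S, var.symm (Fin.last (s + 1)) = Sum.inr (Sum.inr y0) := by
    have hC1 := (hvarC a.2.1).1
    have hC2 := (hvarC a.2.1).2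
    have hS1 := hvarS a.2.2
    have hCle : ((var (Sum.inr (Sum.inl a.2.1)) : Fin (s + 2)) : ℕ) ≤ s + 1 :=
      Nat.lt_succ_iff.1 (var (Sum.inr (Sum.inl a.2.1))).isLt
    have hSle : ((var (Sum.inr (Sum.inr a.2.2)) : Fin (s + 2)) : ℕ) ≤ s + 1 :=
      Nat.lt_succ_iff.1 (var (Sum.inr (Sum.inr a.2.2))).isLt
    rcases h : var.symm (Fin.last (s + 1)) with r | c | y
    · exfalso
      have h2 : var (Sum.inl r) = Fin.last (s + 1) := by rw [← h, Equiv.apply_symm_apply]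
      have h3 := hvarR r
      rw [h2] at h3
      simp [Fin.last] at h3
      omega
    · exfalso
      have h2 : var (Sum.inr (Sum.inl c)) = Fin.last (s + 1) := by
        rw [← h, Equiv.apply_symm_apply]
      have h3 := (hvarC c).2
      rw [h2] at h3
      simp [Fin.last] at h3
      omega
    · exact ⟨y, rfl⟩
  -- nondegeneracy of the submatrix
  have hcast : ((B.submatrix id σ).map ((Int.cast : ℤ → ℚ))).det
      = ((B.submatrix id σ).det : ℚ) := by
    rw [show (B.submatrix id σ).map (Int.cast : ℤ → ℚ)
        = (Int.castRingHom ℚ).mapMatrix (B.submatrix id σ) from rfl, ← RingHom.map_det]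
    rfl
  have hdet : (B.submatrix id σ).det ≠ 0 := by
    intro h0
    have h0q : ((B.submatrix id σ).map ((Int.cast : ℤ → ℚ))).det = 0 := by
      rw [hcast, h0]; norm_num
    obtain ⟨v, hv0, hvz⟩ := Matrix.exists_mulVec_eq_zero_iff.2 h0q
    obtain ⟨x, hxσ, hx0, hxl, hxs⟩ := hext v
    have hvk : ∀ k, (∑ t, ((B k (σ t) : ℤ) : ℚ) * v t) = 0 := by
      intro k
      have h := congrFun hvz k
      simpa [Matrix.mulVec, dotProduct, Matrix.map_apply,
        Matrix.submatrix_apply] using h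
    have hstareq : ∀ p ∈ star, x (var (Sum.inl p.1)) + x (var (Sum.inr (Sum.inl p.2.1)))
        = x (var (Sum.inr (Sum.inr p.2.2))) := by
      intro p hp
      have hk : ((eqn (eqn.symm ⟨p, hp⟩)).1 : R × C × S) = p := by
        rw [Equiv.apply_symm_apply]
      have h1 := (hxs (eqn.symm ⟨p, hp⟩)).trans (hvk (eqn.symm ⟨p, hp⟩))
      rw [hrowsum] at h1
      rw [hk] at h1
      linarith
    obtain ⟨hcR, hcC, hcS⟩ := hconstext (fun r => x (var (Sum.inl r)))
      (fun c => x (var (Sum.inr (Sum.inl c)))) (fun y => x (var (Sum.inr (Sum.inr y)))) hstareq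
    obtain ⟨r0, hr0⟩ := hvar0
    obtain ⟨y0, hy0⟩ := hvarLast
    have hvr0 : var (Sum.inl r0) = 0 := by rw [← hr0, Equiv.apply_symm_apply]
    have hvy0 : var (Sum.inr (Sum.inr y0)) = Fin.last (s + 1) := by
      rw [← hy0, Equiv.apply_symm_apply]
    have hα : ∀ r, x (var (Sum.inl r)) = 0 := by
      intro r
      have h : x (var (Sum.inl r)) = x (var (Sum.inl r0)) := hcR r r0
      rw [hvr0] at h
      rw [h, hx0]
    have hγ : ∀ y, x (var (Sum.inr (Sum.inr y))) = 0 := by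
      intro y
      have h : x (var (Sum.inr (Sum.inr y))) = x (var (Sum.inr (Sum.inr y0))) := hcS y y0
      rw [hvy0] at h
      rw [h, hxl]
    have hβ : ∀ c, x (var (Sum.inr (Sum.inl c))) = 0 := by
      intro c
      have h : x (var (Sum.inr (Sum.inl c))) = x (var (Sum.inr (Sum.inl a.2.1))) := hcC c a.2.1
      have h2 := hstareq a ha
      rw [hα a.1, hγ a.2.2] at h2
      rw [h]
      linarith
    apply hv0
    funext t
    rw [← hxσ t]
    rcases h : var.symm (σ t) with r | c | y
    · have h2 : var (Sum.inl r) = σ t := by rw [← h, Equiv.apply_symm_apply]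
      rw [← h2]
      exact hα r
    · have h2 : var (Sum.inr (Sum.inl c)) = σ t := by rw [← h, Equiv.apply_symm_apply]
      rw [← h2]
      exact hβ c
    · have h2 : var (Sum.inr (Sum.inr y)) = σ t := by rw [← h, Equiv.apply_symm_apply]
      rw [← h2]
      exact hγ y
  refine ⟨?_, hdet⟩
  -- uniqueness
  have huniq : ∀ F G : (R → ℚ) × (C → ℚ) × (S → ℚ),
      IsEqSolution star a F.1 F.2.1 F.2.2 → IsEqSolution star a G.1 G.2.1 G.2.2 → F = G := by
    intro F G hF hG
    obtain ⟨hF1, hF2, hF3, hF4⟩ := hF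
    obtain ⟨hG1, hG2, hG3, hG4⟩ := hG
    have heqs : ∀ p ∈ star,
        (F.1 p.1 - G.1 p.1) + (F.2.1 p.2.1 - G.2.1 p.2.1) = F.2.2 p.2.2 - G.2.2 p.2.2 := by
      intro p hp
      by_cases hpa : p = a
      · subst hpa
        rw [hF1, hG1, hF2, hG2, hF3, hG3]
        norm_num
      · have h1 := hF4 p hp hpa
        have h2 := hG4 p hp hpa
        linarith
    obtain ⟨hcR, hcC, hcS⟩ := hconstext (fun r => F.1 r - G.1 r)
      (fun c => F.2.1 c - G.2.1 c) (fun y => F.2.2 y - G.2.2 y) heqs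
    have e1 : F.1 = G.1 := by
      funext r
      have h : F.1 r - G.1 r = F.1 a.1 - G.1 a.1 := hcR r a.1
      rw [hF1, hG1] at h
      linarith
    have e2 : F.2.1 = G.2.1 := by
      funext cc
      have h : F.2.1 cc - G.2.1 cc = F.2.1 a.2.1 - G.2.1 a.2.1 := hcC cc a.2.1
      rw [hF2, hG2] at h
      linarith
    have e3 : F.2.2 = G.2.2 := by
      funext y
      have h : F.2.2 y - G.2.2 y = F.2.2 a.2.2 - G.2.2 a.2.2 := hcS y a.2.2
      rw [hF3, hG3] at h
      linarith
    exact Prod.ext e1 (Prod.ext e2 e3)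
  -- existence
  have hex : ∃ F : (R → ℚ) × (C → ℚ) × (S → ℚ), IsEqSolution star a F.1 F.2.1 F.2.2 := by
    have hU : IsUnit ((B.submatrix id σ).map ((Int.cast : ℤ → ℚ))).det := by
      rw [hcast]
      exact isUnit_iff_ne_zero.2 (by exact_mod_cast hdet)
    set A := (B.submatrix id σ).map ((Int.cast : ℤ → ℚ)) with hAdef
    set cv : Fin s → ℚ := fun k => if ((eqn k).1 : R × C × S) = a then -1 else 0 with hcvdef
    set ξ := A⁻¹.mulVec cv with hξdef
    have hAξ : A.mulVec ξ = cv := by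
      rw [hξdef, Matrix.mulVec_mulVec, Matrix.mul_nonsing_inv _ hU, Matrix.one_mulVec]
    obtain ⟨x, hxσ, hx0, hxl, hxs⟩ := hext ξ
    have hrows : ∀ k : Fin s, x (var (Sum.inl (eqn k).1.1))
        + x (var (Sum.inr (Sum.inl (eqn k).1.2.1)))
        - x (var (Sum.inr (Sum.inr (eqn k).1.2.2))) = cv k := by
      intro k
      rw [← hrowsum k x, hxs k]
      have h := congrFun hAξ k
      simpa [Matrix.mulVec, dotProduct, hAdef, Matrix.map_apply,
        Matrix.submatrix_apply] using h
    refine ⟨(fun r => x (var (Sum.inl r)) - x (var (Sum.inl a.1)),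
        fun c => x (var (Sum.inr (Sum.inl c))) - x (var (Sum.inr (Sum.inl a.2.1))),
        fun y => x (var (Sum.inr (Sum.inr y))) - x (var (Sum.inl a.1))
          - x (var (Sum.inr (Sum.inl a.2.1)))), ?_, ?_, ?_, ?_⟩
    · simp
    · simp
    · have hk := hrows (eqn.symm ⟨a, ha⟩)
      have hka : ((eqn (eqn.symm ⟨a, ha⟩)).1 : R × C × S) = a := by
        rw [Equiv.apply_symm_apply]
      rw [hka] at hk
      have hcc : cv (eqn.symm ⟨a, ha⟩) = -1 := by
        rw [hcvdef]
        dsimp only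
        rw [if_pos hka]
      rw [hcc] at hk
      dsimp only
      linarith
    · intro b hb hba
      have hk := hrows (eqn.symm ⟨b, hb⟩)
      have hkb : ((eqn (eqn.symm ⟨b, hb⟩)).1 : R × C × S) = b := by
        rw [Equiv.apply_symm_apply]
      rw [hkb] at hk
      have hcc : cv (eqn.symm ⟨b, hb⟩) = 0 := by
        rw [hcvdef]
        dsimp only
        rw [if_neg (fun h => hba (hkb.symm.trans h))]
      rw [hcc] at hk
      dsimp only
      linarith
  obtain ⟨F, hF⟩ := hex
  exact ⟨F, hF, fun G hG => huniq G F hG hF⟩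
end

section
/- Let T = (T*, T△) be a latin bitrade, a ∈ T*, and write g_T[a] = (h1,h2,h3), where h_i(b_i) = g_i(b_i) − g_i(a_i). Then g_T[a] is a homotopy from T(*) to H(T) (all its values lie in H(T)); g_T[a] embeds T(*) into H(T) if and only if g_T embeds T(*) into G(T); and H(T) is generated by the set {h1(b1), h2(b2) : (b1,b2,b3) ∈ T*}. -/
open Function Set

variable {R C S : Type*} [DecidableEq R] [DecidableEq C] [DecidableEq S]

/-- The free abelian group `F(T)` on the disjoint union of rows, columns and symbols. -/
abbrev FreeAb (R C S : Type*) := FreeAbelianGroup (R ⊕ C ⊕ S)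

/-- The generator corresponding to a row. -/
def rowGen (r : R) : FreeAb R C S := FreeAbelianGroup.of (Sum.inl r)

/-- The generator corresponding to a column. -/
def colGen (c : C) : FreeAb R C S := FreeAbelianGroup.of (Sum.inr (Sum.inl c))

/-- The generator corresponding to a symbol. -/
def symGen (s : S) : FreeAb R C S := FreeAbelianGroup.of (Sum.inr (Sum.inr s))

/-- `N(T)`: the subgroup of `F(T)` generated by the elements `a₁ + a₂ - a₃`, `a ∈ T*`. -/
def NT (star : Finset (R × C × S)) : AddSubgroup (FreeAb R C S) :=
  AddSubgroup.closure
    ((fun p : R × C × S => rowGen p.1 + colGen p.2.1 - symGen p.2.2) '' ↑star)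

/-- `G(T) = F(T)/N(T)`. -/
abbrev GT (star : Finset (R × C × S)) := FreeAb R C S ⧸ NT star

/-- The first component of the natural homotopy `g_T : T(*) → G(T)`. -/
def gR (star : Finset (R × C × S)) (r : R) : GT star :=
  QuotientAddGroup.mk (rowGen r)

/-- The second component of the natural homotopy `g_T`. -/
def gC (star : Finset (R × C × S)) (c : C) : GT star :=
  QuotientAddGroup.mk (colGen c)

/-- The third component of the natural homotopy `g_T`. -/
def gS (star : Finset (R × C × S)) (s : S) : GT star :=
  QuotientAddGroup.mk (symGen s)

/-- `H(T)`: the subgroup of `G(T)` generated by all differences `g_i(b_i) - g_i(d_i)`,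
`b, d ∈ T*`, `i ∈ {1,2,3}`. -/
def HT (star : Finset (R × C × S)) : AddSubgroup (GT star) :=
  AddSubgroup.closure
    ({x | ∃ b ∈ star, ∃ d ∈ star, x = gR star b.1 - gR star d.1} ∪
     {x | ∃ b ∈ star, ∃ d ∈ star, x = gC star b.2.1 - gC star d.2.1} ∪
     {x | ∃ b ∈ star, ∃ d ∈ star, x = gS star b.2.2 - gS star d.2.2})


lemma rel_mem {star : Finset (R × C × S)} {p : R × C × S} (hp : p ∈ star) :
    gR star p.1 + gC star p.2.1 = gS star p.2.2 := by
  have h : rowGen p.1 + colGen p.2.1 - symGen p.2.2 ∈ NT star :=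
    AddSubgroup.subset_closure ⟨p, hp, rfl⟩
  have : (QuotientAddGroup.mk (rowGen p.1 + colGen p.2.1) : GT star) =
      QuotientAddGroup.mk (symGen p.2.2) :=
    (QuotientAddGroup.eq_iff_sub_mem).2 h
  simpa [gR, gC, gS, QuotientAddGroup.mk_add] using this

lemma subinj {α G : Type*} [AddCommGroup G] (f : α → G) (c : G) :
    Function.Injective (fun x => f x - c) ↔ Function.Injective f := by
  constructor
  · intro h x y hxy
    exact h (by simp [hxy])
  · intro h x y hxy
    exact h (by simpa [sub_left_inj] using hxy)

/-- **Lemma 4.7 (Lemma 47).** `g_T[a] = (h₁,h₂,h₃)`, `h_i(b_i) = g_i(b_i) - g_i(a_i)`,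
is a homotopy from `T(*)` to `H(T)`; it embeds `T(*)` into `H(T)` iff `g_T` embeds `T(*)`
into `G(T)`; and `H(T)` is generated by `{h₁(b₁), h₂(b₂) : (b₁,b₂,b₃) ∈ T*}`. -/
theorem stmt17 (star tri : Finset (R × C × S)) (hbt : IsLatinBitrade star tri)
    (a : R × C × S) (ha : a ∈ star) :
    (∀ p ∈ star,
      (gR star p.1 - gR star a.1) ∈ HT star ∧
      (gC star p.2.1 - gC star a.2.1) ∈ HT star ∧
      (gS star p.2.2 - gS star a.2.2) ∈ HT star ∧
      (gR star p.1 - gR star a.1) + (gC star p.2.1 - gC star a.2.1) =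
        gS star p.2.2 - gS star a.2.2) ∧
    ((Function.Injective (fun r => gR star r - gR star a.1) ∧
      Function.Injective (fun c => gC star c - gC star a.2.1) ∧
      Function.Injective (fun s => gS star s - gS star a.2.2)) ↔
     (Function.Injective (gR star) ∧ Function.Injective (gC star) ∧
      Function.Injective (gS star))) ∧
    HT star = AddSubgroup.closure
      ({x | ∃ b ∈ star, x = gR star b.1 - gR star a.1} ∪
       {x | ∃ b ∈ star, x = gC star b.2.1 - gC star a.2.1}) := by
  constructor
  · intro p hp
    have hrel := rel_mem hp
    have harel := rel_mem ha
    refine ⟨?_, ?_, ?_, ?_⟩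
    · exact AddSubgroup.subset_closure (Or.inl (Or.inl ⟨p, hp, a, ha, rfl⟩))
    · exact AddSubgroup.subset_closure (Or.inl (Or.inr ⟨p, hp, a, ha, rfl⟩))
    · exact AddSubgroup.subset_closure (Or.inr ⟨p, hp, a, ha, rfl⟩)
    · rw [← hrel, ← harel]; abel
  constructor
  · exact and_congr (subinj _ _) (and_congr (subinj _ _) (subinj _ _))
  · apply le_antisymm
    · rw [HT]
      refine (AddSubgroup.closure_le _).2 ?_
      rintro x ((⟨b, hb, d, hd, rfl⟩ | ⟨b, hb, d, hd, rfl⟩) | ⟨b, hb, d, hd, rfl⟩)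
      · have h1 : gR star b.1 - gR star a.1 ∈ AddSubgroup.closure
            ({x | ∃ b ∈ star, x = gR star b.1 - gR star a.1} ∪
             {x | ∃ b ∈ star, x = gC star b.2.1 - gC star a.2.1}) :=
          AddSubgroup.subset_closure (Or.inl ⟨b, hb, rfl⟩)
        have h2 : gR star d.1 - gR star a.1 ∈ AddSubgroup.closure
            ({x | ∃ b ∈ star, x = gR star b.1 - gR star a.1} ∪
             {x | ∃ b ∈ star, x = gC star b.2.1 - gC star a.2.1}) :=
          AddSubgroup.subset_closure (Or.inl ⟨d, hd, rfl⟩)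
        have := sub_mem h1 h2
        simpa using this
      · have h1 : gC star b.2.1 - gC star a.2.1 ∈ AddSubgroup.closure
            ({x | ∃ b ∈ star, x = gR star b.1 - gR star a.1} ∪
             {x | ∃ b ∈ star, x = gC star b.2.1 - gC star a.2.1}) :=
          AddSubgroup.subset_closure (Or.inr ⟨b, hb, rfl⟩)
        have h2 : gC star d.2.1 - gC star a.2.1 ∈ AddSubgroup.closure
            ({x | ∃ b ∈ star, x = gR star b.1 - gR star a.1} ∪
             {x | ∃ b ∈ star, x = gC star b.2.1 - gC star a.2.1}) :=
          AddSubgroup.subset_closure (Or.inr ⟨d, hd, rfl⟩)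
        have := sub_mem h1 h2
        simpa using this
      · have hb1 : gR star b.1 - gR star a.1 ∈ AddSubgroup.closure
            ({x | ∃ b ∈ star, x = gR star b.1 - gR star a.1} ∪
             {x | ∃ b ∈ star, x = gC star b.2.1 - gC star a.2.1}) :=
          AddSubgroup.subset_closure (Or.inl ⟨b, hb, rfl⟩)
        have hb2 : gC star b.2.1 - gC star a.2.1 ∈ AddSubgroup.closure
            ({x | ∃ b ∈ star, x = gR star b.1 - gR star a.1} ∪
             {x | ∃ b ∈ star, x = gC star b.2.1 - gC star a.2.1}) :=
          AddSubgroup.subset_closure (Or.inr ⟨b, hb, rfl⟩)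
        have hd1 : gR star d.1 - gR star a.1 ∈ AddSubgroup.closure
            ({x | ∃ b ∈ star, x = gR star b.1 - gR star a.1} ∪
             {x | ∃ b ∈ star, x = gC star b.2.1 - gC star a.2.1}) :=
          AddSubgroup.subset_closure (Or.inl ⟨d, hd, rfl⟩)
        have hd2 : gC star d.2.1 - gC star a.2.1 ∈ AddSubgroup.closure
            ({x | ∃ b ∈ star, x = gR star b.1 - gR star a.1} ∪
             {x | ∃ b ∈ star, x = gC star b.2.1 - gC star a.2.1}) :=
          AddSubgroup.subset_closure (Or.inr ⟨d, hd, rfl⟩)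
        have heq : gS star b.2.2 - gS star d.2.2 =
            ((gR star b.1 - gR star a.1) + (gC star b.2.1 - gC star a.2.1)) -
            ((gR star d.1 - gR star a.1) + (gC star d.2.1 - gC star a.2.1)) := by
          rw [← rel_mem hb, ← rel_mem hd]; abel
        rw [heq]
        exact sub_mem (add_mem hb1 hb2) (add_mem hd1 hd2)
    · refine (AddSubgroup.closure_le _).2 ?_
      rintro x (⟨b, hb, rfl⟩ | ⟨b, hb, rfl⟩)
      · exact AddSubgroup.subset_closure (Or.inl (Or.inl ⟨b, hb, a, ha, rfl⟩))
      · exact AddSubgroup.subset_closure (Or.inl (Or.inr ⟨b, hb, a, ha, rfl⟩))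
end

section
/- Let T* be the partial latin square with rows {e,x,y,z,t}, columns {f,a,b,c,d,g} and symbols {1,…,7} consisting exactly of the triples (e,f,1), (e,b,3), (e,c,4), (e,d,5), (x,f,3), (x,a,6), (x,b,2), (x,c,5), (x,g,7), (y,f,5), (y,d,1), (z,b,4), (z,c,2), (t,f,7), (t,a,5), (t,b,6), (t,c,3), (t,g,2). Then every homotopy of T(*) into any group G is trivial: if σ = (σ1,σ2,σ3) are maps from rows, columns and symbols into G with σ1(r)·σ2(c) = σ3(s) for all (r,c,s) ∈ T*, then σ1 is constant with value some g ∈ G, σ2 is constant with value some h ∈ G, and σ3 is constant with value g·h. -/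
/-- The five rows of the latin trade. -/
inductive Rw | e | x | y | z | t
  deriving DecidableEq

/-- The six columns of the latin trade. -/
inductive Cl | f | a | b | c | d | g
  deriving DecidableEq

/-- The seven symbols of the latin trade. -/
inductive Sy | s1 | s2 | s3 | s4 | s5 | s6 | s7
  deriving DecidableEq

open Rw Cl Sy

/-- The latin trade `T*` with 18 cells from the final example of the paper. -/
def Tstar19 : Finset (Rw × Cl × Sy) :=
  {(e, f, s1), (e, b, s3), (e, c, s4), (e, d, s5),
   (x, f, s3), (x, a, s6), (x, b, s2), (x, c, s5), (x, g, s7),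
   (y, f, s5), (y, d, s1),
   (z, b, s4), (z, c, s2),
   (t, f, s7), (t, a, s5), (t, b, s6), (t, c, s3), (t, g, s2)}

lemma key19 {G : Type*} [Group G] (E X Y Z T F A B C D Gc S1 S2 S3 S4 S5 S6 S7 : G)
    (q1 : E*F = S1) (q2 : E*B = S3) (q3 : E*C = S4) (q4 : E*D = S5)
    (q5 : X*F = S3) (q6 : X*A = S6) (q7 : X*B = S2) (q8 : X*C = S5) (q9 : X*Gc = S7)
    (q10 : Y*F = S5) (q11 : Y*D = S1)
    (q12 : Z*B = S4) (q13 : Z*C = S2)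
    (q14 : T*F = S7) (q15 : T*A = S5) (q16 : T*B = S6) (q17 : T*C = S3) (q18 : T*Gc = S2) :
    (X = E ∧ Y = E ∧ Z = E ∧ T = E) ∧ (A = F ∧ B = F ∧ C = F ∧ D = F ∧ Gc = F) ∧
    (S1 = E*F ∧ S2 = E*F ∧ S3 = E*F ∧ S4 = E*F ∧ S5 = E*F ∧ S6 = E*F ∧ S7 = E*F) := by
  have e1 : E*B = X*F := q2.trans q5.symm
  have e2 : E*C = Z*B := q3.trans q12.symm
  have e3a : E*D = X*C := q4.trans q8.symm
  have e3b : E*D = Y*F := q4.trans q10.symm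
  have e3c : E*D = T*A := q4.trans q15.symm
  have e4a : X*B = Z*C := q7.trans q13.symm
  have e4b : X*B = T*Gc := q7.trans q18.symm
  have e5 : X*Gc = T*F := q9.trans q14.symm
  have e6 : T*B = X*A := q16.trans q6.symm
  have e7 : T*C = E*B := q17.trans q2.symm
  have hX : X = E*B*F⁻¹ := by
    calc X = X*F*F⁻¹ := by group
    _ = E*B*F⁻¹ := by rw [← e1]
  have hT : T = E*B*C⁻¹ := by
    calc T = T*C*C⁻¹ := by group
    _ = E*B*C⁻¹ := by rw [e7]
  have hG : Gc = F*C⁻¹*F := by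
    calc Gc = (E*B*F⁻¹)⁻¹ * (E*B*F⁻¹*Gc) := by group
    _ = X⁻¹ * (X*Gc) := by rw [← hX]
    _ = X⁻¹ * (T*F) := by rw [e5]
    _ = (E*B*F⁻¹)⁻¹ * (E*B*C⁻¹*F) := by rw [hX, hT]
    _ = F*C⁻¹*F := by group
  have hD : D = B*F⁻¹*C := by
    calc D = E⁻¹*(E*D) := by group
    _ = E⁻¹*(X*C) := by rw [e3a]
    _ = E⁻¹*(E*B*F⁻¹*C) := by rw [hX]
    _ = B*F⁻¹*C := by group
  have hY : Y = E*D*F⁻¹ := by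
    calc Y = Y*F*F⁻¹ := by group
    _ = E*D*F⁻¹ := by rw [← e3b]
  have hZ : Z = E*C*B⁻¹ := by
    calc Z = Z*B*B⁻¹ := by group
    _ = E*C*B⁻¹ := by rw [← e2]
  have hA : A = F*C⁻¹*B := by
    calc A = (E*B*F⁻¹)⁻¹*(E*B*F⁻¹*A) := by group
    _ = X⁻¹*(X*A) := by rw [← hX]
    _ = X⁻¹*(T*B) := by rw [← e6]
    _ = (E*B*F⁻¹)⁻¹*(E*B*C⁻¹*B) := by rw [hX, hT]
    _ = F*C⁻¹*B := by group
  have hB : B = F*C⁻¹*F*C⁻¹*F := by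
    calc B = (E*B*F⁻¹)⁻¹ * (E*B*F⁻¹*B) := by group
    _ = X⁻¹ * (X*B) := by rw [← hX]
    _ = X⁻¹ * (T*Gc) := by rw [e4b]
    _ = (E*B*F⁻¹)⁻¹ * (E*B*C⁻¹*(F*C⁻¹*F)) := by rw [hX, hT, hG]
    _ = F*C⁻¹*F*C⁻¹*F := by group
  obtain ⟨u, hu⟩ : ∃ u, F = C*u := ⟨C⁻¹*F, by group⟩
  have cED : E*D = E*C*(u*u) := by rw [hD, hB, hu]; group
  have cTA : T*A = E*C*(u*(u*(u*(u*(u*(u*u)))))) := by rw [hT, hA, hB, hu]; group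
  have cXB : X*B = E*C*(u*(u*(u*(u*u)))) := by rw [hX, hB, hu]; group
  have cZC : Z*C = E*C*(u*(u*u))⁻¹ := by rw [hZ, hB, hu]; group
  have hu5 : u^5 = 1 := by
    have h := e3c
    rw [cED, cTA] at h
    have hc : u*u = u*(u*(u*(u*(u*(u*u))))) := mul_left_cancel h
    calc u^5 = (u*u)⁻¹ * (u*(u*(u*(u*(u*(u*u)))))) := by group
    _ = (u*u)⁻¹ * (u*u) := congrArg ((u*u)⁻¹ * ·) hc.symm
    _ = 1 := by group
  have hu8 : u^8 = 1 := by
    have h := e4a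
    rw [cXB, cZC] at h
    have hc : u*(u*(u*(u*u))) = (u*(u*u))⁻¹ := mul_left_cancel h
    calc u^8 = (u*(u*u)) * (u*(u*(u*(u*u)))) := by simp [pow_succ, pow_zero, one_mul, mul_assoc]
    _ = (u*(u*u)) * (u*(u*u))⁻¹ := congrArg ((u*(u*u)) * ·) hc
    _ = 1 := by group
  have hu1 : u = 1 := by
    calc u = (u^8)^2 * ((u^5)^3)⁻¹ := by group
    _ = 1^2 * (1^3)⁻¹ := by rw [hu8, hu5]
    _ = 1 := by group
  have hCF : C = F := by rw [hu, hu1, mul_one]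
  have hBv : B = F := by rw [hB, hCF]; group
  have hGv : Gc = F := by rw [hG, hCF]; group
  have hAv : A = F := by rw [hA, hBv, hCF]; group
  have hDv : D = F := by rw [hD, hBv, hCF]; group
  have hXv : X = E := by rw [hX, hBv]; group
  have hTv : T = E := by rw [hT, hBv, hCF]; group
  have hZv : Z = E := by rw [hZ, hBv, hCF]; group
  have hYv : Y = E := by rw [hY, hD, hBv, hCF]; group
  refine ⟨⟨hXv, hYv, hZv, hTv⟩, ⟨hAv, hBv, hCF, hDv, hGv⟩, ?_, ?_, ?_, ?_, ?_, ?_, ?_⟩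
  · rw [← q1]
  · rw [← q7, hXv, hBv]
  · rw [← q2, hBv]
  · rw [← q3, hCF]
  · rw [← q4, hDv]
  · rw [← q6, hXv, hAv]
  · rw [← q9, hXv, hGv]

/-- **Final Lemma.** Every homotopy of this `T(*)` into any group is trivial. -/
theorem stmt19 (G : Type*) [Group G]
    (σ1 : Rw → G) (σ2 : Cl → G) (σ3 : Sy → G)
    (hσ : ∀ p ∈ Tstar19, σ1 p.1 * σ2 p.2.1 = σ3 p.2.2) :
    ∃ g0 h0 : G, (∀ r : Rw, σ1 r = g0) ∧ (∀ c0 : Cl, σ2 c0 = h0) ∧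
      (∀ s0 : Sy, σ3 s0 = g0 * h0) := by
  have q1 : σ1 e * σ2 f = σ3 s1 := hσ (e, f, s1) (by decide)
  have q2 : σ1 e * σ2 b = σ3 s3 := hσ (e, b, s3) (by decide)
  have q3 : σ1 e * σ2 c = σ3 s4 := hσ (e, c, s4) (by decide)
  have q4 : σ1 e * σ2 d = σ3 s5 := hσ (e, d, s5) (by decide)
  have q5 : σ1 x * σ2 f = σ3 s3 := hσ (x, f, s3) (by decide)
  have q6 : σ1 x * σ2 a = σ3 s6 := hσ (x, a, s6) (by decide)
  have q7 : σ1 x * σ2 b = σ3 s2 := hσ (x, b, s2) (by decide)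
  have q8 : σ1 x * σ2 c = σ3 s5 := hσ (x, c, s5) (by decide)
  have q9 : σ1 x * σ2 g = σ3 s7 := hσ (x, g, s7) (by decide)
  have q10 : σ1 y * σ2 f = σ3 s5 := hσ (y, f, s5) (by decide)
  have q11 : σ1 y * σ2 d = σ3 s1 := hσ (y, d, s1) (by decide)
  have q12 : σ1 z * σ2 b = σ3 s4 := hσ (z, b, s4) (by decide)
  have q13 : σ1 z * σ2 c = σ3 s2 := hσ (z, c, s2) (by decide)
  have q14 : σ1 t * σ2 f = σ3 s7 := hσ (t, f, s7) (by decide)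
  have q15 : σ1 t * σ2 a = σ3 s5 := hσ (t, a, s5) (by decide)
  have q16 : σ1 t * σ2 b = σ3 s6 := hσ (t, b, s6) (by decide)
  have q17 : σ1 t * σ2 c = σ3 s3 := hσ (t, c, s3) (by decide)
  have q18 : σ1 t * σ2 g = σ3 s2 := hσ (t, g, s2) (by decide)
  obtain ⟨⟨hX, hY, hZ, hT⟩, ⟨hA, hB, hC, hD, hG⟩, h1, h2, h3, h4, h5, h6, h7⟩ :=
    key19 (σ1 e) (σ1 x) (σ1 y) (σ1 z) (σ1 t) (σ2 f) (σ2 a) (σ2 b) (σ2 c) (σ2 d) (σ2 g)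
      (σ3 s1) (σ3 s2) (σ3 s3) (σ3 s4) (σ3 s5) (σ3 s6) (σ3 s7)
      q1 q2 q3 q4 q5 q6 q7 q8 q9 q10 q11 q12 q13 q14 q15 q16 q17 q18
  refine ⟨σ1 e, σ2 f, ?_, ?_, ?_⟩
  · intro r; cases r <;> first | rfl | assumption
  · intro c0; cases c0 <;> first | rfl | assumption
  · intro s0; cases s0 <;> assumption
end
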